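/- arXiv:1908.08154 — 4 statements merged into one kernel-verified Lean document; each statement's English description precedes it below -/
import Mathlib

section
/- Fix a ∈ (0, 1/2), a positive integer p, and λ ∈ {0, 1, 2}. There exists C > 0 such that for every m ∈ ℕ with m ≥ 1 and every x ∈ [m^{−a}, π/p − m^{−a}], each of the four sums P_λ = Σ_{j=0}^{m−1} j^λ cos(2pjx), Q_λ = Σ_{j=0}^{m−1} j^λ sin(2pjx), R_λ = Σ_{j=0}^{m−1} j^λ cos((2pj+1)x) and S_λ = Σ_{j=0}^{m−1} j^λ sin((2pj+1)x) satisfies |P_λ|, |Q_λ|, |R_λ|, |S_λ| ≤ C m^{λ+a}. -/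
open Real

open Finset in
private lemma geom_partial' (z : ℂ) (hz : ‖z‖ = 1) (hz1 : (1:ℂ) - z ≠ 0) (k : ℕ) :
    ‖∑ j ∈ range k, z ^ j‖ ≤ 2 / ‖1 - z‖ := by
  have h1 : (1 - z) * ∑ j ∈ range k, z ^ j = 1 - z ^ k := by
    have := geom_sum_mul z k
    linear_combination -this
  have h2 : ‖1 - z ^ k‖ ≤ 2 := by
    calc ‖1 - z ^ k‖ ≤ ‖(1:ℂ)‖ + ‖z ^ k‖ := by
          simpa [sub_eq_add_neg] using norm_add_le (1:ℂ) (-(z ^ k))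
      _ ≤ 2 := by simp [map_pow, hz]; norm_num
  have hpos : 0 < ‖1 - z‖ := by
    simpa [norm_pos_iff] using hz1
  rw [le_div_iff₀ hpos, mul_comm]
  calc ‖1 - z‖ * ‖∑ j ∈ range k, z ^ j‖
      = ‖1 - z ^ k‖ := by rw [← norm_mul, h1]
    _ ≤ 2 := h2

private lemma natpow_abs_le' (i m lam : ℕ) (h : i ≤ m) :
    ‖(i:ℂ) ^ lam‖ ≤ (m:ℝ) ^ lam := by
  rw [norm_pow, Complex.norm_natCast]
  exact pow_le_pow_left₀ (by positivity) (by exact_mod_cast h) lam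

open Finset in
private lemma abel_bound' (z : ℂ) (hz : ‖z‖ = 1) (hz1 : (1:ℂ) - z ≠ 0) (lam m : ℕ) :
    ‖∑ j ∈ range m, (j:ℂ) ^ lam * z ^ j‖
      ≤ 2 * (m:ℝ) ^ lam * (2 / ‖1 - z‖) := by
  have M0 : (0:ℝ) ≤ 2 / ‖1 - z‖ := by positivity
  set M := 2 / ‖1 - z‖ with hM
  have hG : ∀ k, ‖∑ j ∈ range k, z ^ j‖ ≤ M := fun k => geom_partial' z hz hz1 k
  rcases Nat.eq_zero_or_pos m with rfl | hm
  · simp; positivity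
  have key := Finset.sum_range_by_parts (fun j => (j:ℂ) ^ lam) (fun j => z ^ j) m
  simp only [smul_eq_mul] at key
  rw [key]
  have h1 : ‖((m-1:ℕ):ℂ) ^ lam * ∑ i ∈ range m, z ^ i‖
      ≤ (m:ℝ) ^ lam * M := by
    rw [norm_mul]
    exact mul_le_mul (natpow_abs_le' _ _ _ (Nat.sub_le m 1)) (hG m) (norm_nonneg _)
      (by positivity)
  have h2 : ‖∑ i ∈ range (m-1),
        (((i+1:ℕ):ℂ) ^ lam - (i:ℂ) ^ lam) * ∑ j ∈ range (i+1), z ^ j‖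
      ≤ (m:ℝ) ^ lam * M := by
    calc ‖∑ i ∈ range (m-1),
          (((i+1:ℕ):ℂ) ^ lam - (i:ℂ) ^ lam) * ∑ j ∈ range (i+1), z ^ j‖
        ≤ ∑ i ∈ range (m-1), ‖(((i+1:ℕ):ℂ) ^ lam - (i:ℂ) ^ lam) * ∑ j ∈ range (i+1), z ^ j‖ :=
          norm_sum_le _ _
      _ ≤ ∑ i ∈ range (m-1), ((((i+1:ℕ):ℝ)) ^ lam - ((i:ℕ):ℝ) ^ lam) * M := by
          apply Finset.sum_le_sum
          intro i _
          rw [norm_mul]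
          have hmono : ((i:ℕ):ℝ) ^ lam ≤ (((i+1:ℕ)):ℝ) ^ lam :=
            pow_le_pow_left₀ (by positivity) (by push_cast; linarith) lam
          apply mul_le_mul _ (hG (i+1)) (norm_nonneg _) (by linarith)
          have : (((i+1:ℕ):ℂ) ^ lam - (i:ℂ) ^ lam)
              = (((((i+1:ℕ):ℝ)) ^ lam - ((i:ℕ):ℝ) ^ lam : ℝ) : ℂ) := by push_cast; ring
          rw [this, Complex.norm_real, Real.norm_eq_abs, abs_of_nonneg (by linarith)]
      _ = ((((m-1:ℕ):ℝ)) ^ lam - ((0:ℕ):ℝ) ^ lam) * M := by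
          rw [← Finset.sum_mul]
          congr 1
          exact Finset.sum_range_sub (fun i => ((i:ℕ):ℝ) ^ lam) (m-1)
      _ ≤ (m:ℝ) ^ lam * M := by
          apply mul_le_mul_of_nonneg_right _ M0
          have h0 : (0:ℝ) ≤ ((0:ℕ):ℝ) ^ lam := by positivity
          have h1 : (((m-1:ℕ)):ℝ) ^ lam ≤ (m:ℝ) ^ lam :=
            pow_le_pow_left₀ (by positivity) (by exact_mod_cast Nat.sub_le m 1) lam
          linarith
  calc ‖_‖ ≤ _ := norm_sub_le _ _
    _ ≤ (m:ℝ) ^ lam * M + (m:ℝ) ^ lam * M := add_le_add h1 h2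
    _ = 2 * (m:ℝ) ^ lam * M := by ring

private lemma one_sub_exp' (θ : ℝ) :
    ‖1 - Complex.exp ((2*θ:ℝ) * Complex.I)‖ = 2 * |Real.sin θ| := by
  have key : (1:ℂ) - Complex.exp ((2*θ:ℝ) * Complex.I)
      = -2 * Complex.sin θ * Complex.I * Complex.exp ((θ:ℝ) * Complex.I) := by
    rw [Complex.sin]
    have h2 : Complex.exp ((θ:ℂ) * Complex.I) * Complex.exp ((θ:ℂ) * Complex.I)
        = Complex.exp (((2*θ:ℝ):ℂ) * Complex.I) := by
      rw [← Complex.exp_add]; push_cast; ring_nf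
    have h3 : Complex.exp (-(θ:ℂ) * Complex.I) * Complex.exp ((θ:ℂ) * Complex.I) = 1 := by
      rw [← Complex.exp_add]; norm_num
    have hI : Complex.I ^ 2 = -1 := Complex.I_sq
    linear_combination -h3 + h2 + (Complex.exp (-(θ:ℂ) * Complex.I) * Complex.exp ((θ:ℂ) * Complex.I) - Complex.exp ((θ:ℂ) * Complex.I)^2) * hI
  rw [key]
  rw [norm_mul, norm_mul, norm_mul, Complex.norm_I, Complex.norm_exp_ofReal_mul_I,
    ← Complex.ofReal_sin, Complex.norm_real, Real.norm_eq_abs]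
  norm_num

open Finset in
private lemma sum_re_im' (lam m : ℕ) (c s : ℝ) :
    (∑ j ∈ range m, (j:ℝ) ^ lam * Real.cos (c * j + s))
        = (Complex.exp ((s:ℝ) * Complex.I) * ∑ j ∈ range m, (j:ℂ) ^ lam * (Complex.exp ((c:ℝ) * Complex.I)) ^ j).re
    ∧ (∑ j ∈ range m, (j:ℝ) ^ lam * Real.sin (c * j + s))
        = (Complex.exp ((s:ℝ) * Complex.I) * ∑ j ∈ range m, (j:ℂ) ^ lam * (Complex.exp ((c:ℝ) * Complex.I)) ^ j).im := by
  have hterm : ∀ j : ℕ, Complex.exp ((s:ℝ) * Complex.I) * ((j:ℂ) ^ lam * (Complex.exp ((c:ℝ) * Complex.I)) ^ j)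
      = (((j:ℝ) ^ lam : ℝ) : ℂ) * Complex.exp (((c * j + s : ℝ)) * Complex.I) := by
    intro j
    have harg : (((c * j + s : ℝ)):ℂ) * Complex.I
        = (s:ℂ) * Complex.I + (j:ℂ) * ((c:ℂ) * Complex.I) := by push_cast; ring
    rw [← Complex.exp_nat_mul, harg, Complex.exp_add]
    push_cast; ring
  rw [Finset.mul_sum, Finset.sum_congr rfl (fun j _ => hterm j)]
  constructor
  · rw [Complex.re_sum]
    exact Finset.sum_congr rfl fun j _ => by
      rw [Complex.re_ofReal_mul, Complex.exp_ofReal_mul_I_re]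
  · rw [Complex.im_sum]
    exact Finset.sum_congr rfl fun j _ => by
      rw [Complex.im_ofReal_mul, Complex.exp_ofReal_mul_I_im]

/-- Fix `a ∈ (0, 1/2)`, a positive integer `p` and `λ ∈ {0, 1, 2}`. There exists `C > 0`
such that for every `m ≥ 1` and every `x ∈ [m^{−a}, π/p − m^{−a}]`, each of the sums
`P_λ = Σ_{j<m} j^λ cos(2pjx)`, `Q_λ = Σ_{j<m} j^λ sin(2pjx)`,
`R_λ = Σ_{j<m} j^λ cos((2pj+1)x)`, `S_λ = Σ_{j<m} j^λ sin((2pj+1)x)`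
is bounded by `C m^{λ+a}`. -/
theorem trig_sums_bound (a : ℝ) (ha : a ∈ Set.Ioo (0:ℝ) (1/2)) (p : ℕ) (hp : 1 ≤ p)
    (lam : ℕ) (hlam : lam ≤ 2) :
    ∃ C > 0, ∀ m : ℕ, 1 ≤ m → ∀ x : ℝ,
      (m : ℝ) ^ (-a) ≤ x → x ≤ π / p - (m : ℝ) ^ (-a) →
      |∑ j ∈ Finset.range m, (j : ℝ) ^ lam * Real.cos (((2 * p * j : ℕ) : ℝ) * x)|
          ≤ C * (m : ℝ) ^ ((lam : ℝ) + a) ∧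
      |∑ j ∈ Finset.range m, (j : ℝ) ^ lam * Real.sin (((2 * p * j : ℕ) : ℝ) * x)|
          ≤ C * (m : ℝ) ^ ((lam : ℝ) + a) ∧
      |∑ j ∈ Finset.range m, (j : ℝ) ^ lam * Real.cos (((2 * p * j + 1 : ℕ) : ℝ) * x)|
          ≤ C * (m : ℝ) ^ ((lam : ℝ) + a) ∧
      |∑ j ∈ Finset.range m, (j : ℝ) ^ lam * Real.sin (((2 * p * j + 1 : ℕ) : ℝ) * x)|
          ≤ C * (m : ℝ) ^ ((lam : ℝ) + a) := by
  obtain ⟨ha0, ha1⟩ := ha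
  have hπ : (0:ℝ) < π := Real.pi_pos
  refine ⟨π + 1, by positivity, ?_⟩
  intro m hm x hx1 hx2
  set t := (m:ℝ) ^ (-a) with hT
  have hm1 : (1:ℝ) ≤ m := by exact_mod_cast hm
  have hmpos : (0:ℝ) < m := by linarith
  have ht : 0 < t := Real.rpow_pos_of_pos hmpos _
  have hp' : (0:ℝ) < p := by exact_mod_cast hp
  have hp1 : (1:ℝ) ≤ p := by exact_mod_cast hp
  have hxpos : 0 < x := lt_of_lt_of_le ht hx1
  -- p * t ≤ π / 2
  have h2t : 2 * t ≤ π / p := by linarith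
  have h2t' : 2 * t * p ≤ π := (le_div_iff₀ hp').mp h2t
  have hpt : (p:ℝ) * t ≤ π / 2 := by nlinarith
  -- bounds on p * x
  have hptx1 : (p:ℝ) * t ≤ (p:ℝ) * x := mul_le_mul_of_nonneg_left hx1 hp'.le
  have hptx2 : (p:ℝ) * x ≤ π - (p:ℝ) * t := by
    have h := mul_le_mul_of_nonneg_left hx2 hp'.le
    have hππ : (p:ℝ) * (π / p - t) = π - p * t := by field_simp
    linarith [hππ ▸ h]
  have htp : t ≤ (p:ℝ) * t := by nlinarith
  -- lower bound for sin (p x)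
  have hsin : 2 / π * t ≤ Real.sin ((p:ℝ) * x) := by
    rcases le_or_gt ((p:ℝ) * x) (π / 2) with h | h
    · have hj := Real.mul_le_sin (by positivity : (0:ℝ) ≤ (p:ℝ) * x) h
      have : 2 / π * t ≤ 2 / π * ((p:ℝ) * x) := by
        apply mul_le_mul_of_nonneg_left _ (by positivity)
        linarith
      linarith
    · rw [← Real.sin_pi_sub]
      have h1 : (0:ℝ) ≤ π - p * x := by nlinarith
      have h2 : π - p * x ≤ π / 2 := by linarith
      have hj := Real.mul_le_sin h1 h2
      have : 2 / π * t ≤ 2 / π * (π - (p:ℝ) * x) := by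
        apply mul_le_mul_of_nonneg_left _ (by positivity)
        linarith
      linarith
  have hsinpos : 0 < Real.sin ((p:ℝ) * x) := lt_of_lt_of_le (by positivity) hsin
  -- the complex unit
  set z := Complex.exp (((2 * ((p:ℝ) * x)):ℝ) * Complex.I) with hz
  have habsz : ‖z‖ = 1 := Complex.norm_exp_ofReal_mul_I _
  have h1z : ‖1 - z‖ = 2 * Real.sin ((p:ℝ) * x) := by
    rw [hz, one_sub_exp' ((p:ℝ) * x), abs_of_pos hsinpos]
  have hz1 : (1:ℂ) - z ≠ 0 := by
    intro h
    rw [h, norm_zero] at h1z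
    nlinarith
  -- powers of m
  have hma : 0 < (m:ℝ) ^ a := Real.rpow_pos_of_pos hmpos a
  have hmlam : (0:ℝ) < (m:ℝ) ^ lam := by positivity
  have hta : t * (m:ℝ) ^ a = 1 := by
    rw [hT, ← Real.rpow_add hmpos]; simp
  have hrt : (m:ℝ) ^ ((lam:ℝ) + a) = (m:ℝ) ^ lam * (m:ℝ) ^ a := by
    rw [Real.rpow_add hmpos, Real.rpow_natCast]
  have hrtpos : (0:ℝ) < (m:ℝ) ^ ((lam:ℝ) + a) := Real.rpow_pos_of_pos hmpos _
  -- key bound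
  set S := ∑ j ∈ Finset.range m, (j:ℂ) ^ lam * z ^ j with hS
  have hK : ‖S‖ ≤ π * (m:ℝ) ^ ((lam:ℝ) + a) := by
    refine (abel_bound' z habsz hz1 lam m).trans ?_
    rw [h1z, hrt]
    have e1 : 2 * (m:ℝ) ^ lam * (2 / (2 * Real.sin ((p:ℝ) * x)))
        = 2 * (m:ℝ) ^ lam / Real.sin ((p:ℝ) * x) := by
      field_simp
    rw [e1, div_le_iff₀ hsinpos]
    have hmul := mul_le_mul_of_nonneg_left hsin
      (show (0:ℝ) ≤ π * ((m:ℝ) ^ lam * (m:ℝ) ^ a) by positivity)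
    have hL : π * ((m:ℝ) ^ lam * (m:ℝ) ^ a) * (2 / π * t) = 2 * (m:ℝ) ^ lam := by
      have hπ0 : π ≠ 0 := ne_of_gt hπ
      field_simp
      linear_combination hta
    rw [hL] at hmul
    linarith
  have habs : ∀ s : ℝ, ‖Complex.exp ((s:ℝ) * Complex.I) * S‖
      ≤ (π + 1) * (m:ℝ) ^ ((lam:ℝ) + a) := by
    intro s
    rw [norm_mul, Complex.norm_exp_ofReal_mul_I, one_mul]
    refine hK.trans ?_
    exact mul_le_mul_of_nonneg_right (by linarith) hrtpos.le
  have hre : ∀ s : ℝ, |(Complex.exp ((s:ℝ) * Complex.I) * S).re|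
      ≤ (π + 1) * (m:ℝ) ^ ((lam:ℝ) + a) :=
    fun s => le_trans (Complex.abs_re_le_norm _) (habs s)
  have him : ∀ s : ℝ, |(Complex.exp ((s:ℝ) * Complex.I) * S).im|
      ≤ (π + 1) * (m:ℝ) ^ ((lam:ℝ) + a) :=
    fun s => le_trans (Complex.abs_im_le_norm _) (habs s)
  have harg0 : ∀ j : ℕ, ((2 * p * j : ℕ) : ℝ) * x = (2 * ((p:ℝ) * x)) * j + 0 := by
    intro j; push_cast; ring
  have harg1 : ∀ j : ℕ, ((2 * p * j + 1 : ℕ) : ℝ) * x = (2 * ((p:ℝ) * x)) * j + x := by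
    intro j; push_cast; ring
  refine ⟨?_, ?_, ?_, ?_⟩
  · have := (sum_re_im' lam m (2 * ((p:ℝ) * x)) 0).1
    rw [Finset.sum_congr rfl (fun j _ => by rw [harg0 j]), this]
    exact hre 0
  · have := (sum_re_im' lam m (2 * ((p:ℝ) * x)) 0).2
    rw [Finset.sum_congr rfl (fun j _ => by rw [harg0 j]), this]
    exact him 0
  · have := (sum_re_im' lam m (2 * ((p:ℝ) * x)) x).1
    rw [Finset.sum_congr rfl (fun j _ => by rw [harg1 j]), this]
    exact hre x
  · have := (sum_re_im' lam m (2 * ((p:ℝ) * x)) x).2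
    rw [Finset.sum_congr rfl (fun j _ => by rw [harg1 j]), this]
    exact him x
end

section
/- For every integer ℓ ≥ 2, the constant K_ℓ satisfies 1 < K_ℓ ≤ (1 + √3)/2. -/
open Real

/-- `u_ℓ(s) = sin(ℓ s) / (ℓ sin s)`. -/
noncomputable def uFun (ℓ : ℕ) (s : ℝ) : ℝ := Real.sin (ℓ * s) / (ℓ * Real.sin s)

/-- `K_ℓ = (1/π²) ∫₀^π ∫₀^{π/2} √(1 + 3(1 − u_ℓ(s)²)/(1 + u_ℓ(s) cos t)²) ds dt`. -/
noncomputable def KConst (ℓ : ℕ) : ℝ :=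
  (1 / π ^ 2) * ∫ t in (0:ℝ)..π, ∫ s in (0:ℝ)..(π / 2),
    Real.sqrt (1 + 3 * (1 - uFun ℓ s ^ 2) / (1 + uFun ℓ s * Real.cos t) ^ 2)

open MeasureTheory Set Filter Topology intervalIntegral

lemma abs_sin_nat_mul_le (n : ℕ) (x : ℝ) : |Real.sin (n * x)| ≤ n * |Real.sin x| := by
  induction n with
  | zero => simp
  | succ n ih =>
    have h : ((n:ℝ)+1) * x = n*x + x := by ring
    push_cast
    rw [h, Real.sin_add]
    calc |Real.sin (n*x) * Real.cos x + Real.cos (n*x) * Real.sin x|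
        ≤ |Real.sin (n*x) * Real.cos x| + |Real.cos (n*x) * Real.sin x| := abs_add_le _ _
      _ ≤ |Real.sin (n*x)| + |Real.sin x| := by
          rw [abs_mul, abs_mul]
          have := Real.abs_cos_le_one x
          have := Real.abs_cos_le_one (n*x)
          have := abs_nonneg (Real.sin (n*x))
          have := abs_nonneg (Real.sin x)
          nlinarith
      _ ≤ (n:ℝ) * |Real.sin x| + |Real.sin x| := by linarith
      _ = ((n:ℝ)+1) * |Real.sin x| := by ring

lemma abs_sin_nat_mul_lt {n : ℕ} (hn : 2 ≤ n) {x : ℝ} (hx : 0 < x) (hx' : x < π/2) :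
    |Real.sin (n * x)| < n * Real.sin x := by
  have hs : 0 < Real.sin x := Real.sin_pos_of_pos_of_lt_pi hx (by linarith [Real.pi_pos])
  have hc : |Real.cos x| < 1 := by
    rw [abs_lt]
    constructor
    · nlinarith [Real.cos_pos_of_mem_Ioo (show x ∈ Ioo (-(π/2)) (π/2) from ⟨by linarith, hx'⟩)]
    · have h1 : Real.cos x ^ 2 < 1 := by nlinarith [Real.sin_sq_add_cos_sq x]
      have h2 := sq_abs (Real.cos x)
      nlinarith [abs_nonneg (Real.cos x)]
  induction n, hn using Nat.le_induction with
  | base =>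
    have : (2:ℕ) * x = 2 * x := by norm_num
    push_cast
    rw [Real.sin_two_mul, abs_mul, abs_mul]
    rw [abs_of_nonneg (by norm_num : (0:ℝ) ≤ 2), abs_of_pos hs]
    nlinarith
  | succ n hn ih =>
    push_cast
    have h : ((n:ℝ)+1) * x = n*x + x := by ring
    rw [h, Real.sin_add]
    calc |Real.sin (n*x) * Real.cos x + Real.cos (n*x) * Real.sin x|
        ≤ |Real.sin (n*x)| * |Real.cos x| + |Real.cos (n*x)| * |Real.sin x| := by
          rw [← abs_mul, ← abs_mul]; exact abs_add_le _ _
      _ ≤ |Real.sin (n*x)| + Real.sin x := by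
          have h1 := abs_nonneg (Real.sin (n*x))
          have h2 := Real.abs_cos_le_one (n*x)
          rw [abs_of_pos hs]
          nlinarith [hc.le, abs_nonneg (Real.cos x)]
      _ < (n:ℝ) * Real.sin x + Real.sin x := by have := ih; linarith
      _ = ((n:ℝ)+1) * Real.sin x := by ring

lemma denom_pos {u : ℝ} (hu : |u| < 1) (t : ℝ) : 0 < 1 + u * Real.cos t := by
  have h1 : |u * Real.cos t| < 1 := by
    calc |u * Real.cos t| = |u| * |Real.cos t| := abs_mul _ _
      _ ≤ |u| * 1 := by
          have := Real.abs_cos_le_one t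
          have := abs_nonneg u
          nlinarith
      _ < 1 := by simpa using hu
  linarith [(abs_lt.1 h1).1]

lemma contKey {u : ℝ} (hu : |u| < 1) :
    Continuous fun t => Real.sqrt (1-u^2) / (1 + u * Real.cos t) :=
  Continuous.div continuous_const (by continuity) (fun t => (denom_pos hu t).ne')

lemma intKey {u : ℝ} (hu : |u| < 1) :
    ∫ t in (0:ℝ)..π, Real.sqrt (1-u^2) / (1 + u * Real.cos t) = π := by
  obtain ⟨hu1, hu2⟩ := abs_lt.1 hu
  have h1u : (0:ℝ) < 1 + u := by linarith
  have h1u' : (0:ℝ) < 1 - u := by linarith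
  set w : ℝ := Real.sqrt ((1-u)/(1+u)) with hw
  have hwnn : (0:ℝ) ≤ (1-u)/(1+u) := le_of_lt (div_pos h1u' h1u)
  have hk2 : w^2 = (1-u)/(1+u) := Real.sq_sqrt hwnn
  have hkpos : 0 < w := Real.sqrt_pos.mpr (div_pos h1u' h1u)
  have hsq : Real.sqrt (1-u^2) = w * (1+u) := by
    rw [show (1:ℝ)-u^2 = (1-u)/(1+u) * (1+u)^2 by field_simp; ring]
    rw [Real.sqrt_mul hwnn, Real.sqrt_sq h1u.le]
  set g : ℝ → ℝ := fun t => Real.sqrt (1-u^2) / (1 + u * Real.cos t) with hg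
  have hgc : Continuous g := contKey hu
  set F : ℝ → ℝ := fun x => 2 * Real.arctan (w * Real.tan (x/2)) with hF
  have hderiv : ∀ x ∈ Ico (0:ℝ) π, HasDerivAt F (g x) x := by
    intro x hx
    have hpi := Real.pi_pos
    have hc : 0 < Real.cos (x/2) :=
      Real.cos_pos_of_mem_Ioo ⟨by linarith [hx.1], by linarith [hx.2]⟩
    have h1 : HasDerivAt (fun y : ℝ => y/2) (1/2) x := (hasDerivAt_id x).div_const 2
    have h2 : HasDerivAt Real.tan (1 / Real.cos (x/2)^2) (x/2) := Real.hasDerivAt_tan hc.ne'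
    have h3 : HasDerivAt (fun y : ℝ => Real.tan (y/2)) (1 / Real.cos (x/2)^2 * (1/2)) x :=
      by have := h2.comp x h1; exact this
    have h4 : HasDerivAt (fun y : ℝ => w * Real.tan (y/2)) (w * (1 / Real.cos (x/2)^2 * (1/2))) x :=
      h3.const_mul w
    have h5 := h4.arctan
    have h6 := h5.const_mul (2:ℝ)
    convert h6 using 1
    case e'_4 => rfl
    case e'_5 => rfl
    have hcosx : Real.cos x = 2 * Real.cos (x/2)^2 - 1 := by
      have h := Real.cos_two_mul (x/2)
      rw [show 2*(x/2) = x by ring] at h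
      linarith
    have hs2 : Real.sin (x/2)^2 = 1 - Real.cos (x/2)^2 := by
      nlinarith [Real.sin_sq_add_cos_sq (x/2)]
    have hd : (0:ℝ) < 1 + u * (2 * Real.cos (x/2)^2 - 1) := by
      rw [← hcosx]; exact denom_pos hu x
    have e1 : 1 + (w * Real.tan (x/2))^2 = (1 + u*(2*Real.cos (x/2)^2-1))/((1+u)*Real.cos (x/2)^2) := by
      rw [mul_pow, Real.tan_eq_sin_div_cos, div_pow, hk2, hs2]
      field_simp
      ring
    rw [hg]
    simp only
    rw [hsq, hcosx, e1]
    rw [div_div_eq_mul_div, one_mul]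
    field_simp
  have hint : ∀ x : ℝ, x ∈ Ico (0:ℝ) π → (∫ t in (0:ℝ)..x, g t) = F x := by
    intro x hx
    have : (∫ t in (0:ℝ)..x, g t) = F x - F 0 := by
      apply intervalIntegral.integral_eq_sub_of_hasDerivAt
      · intro t ht
        rw [uIcc_of_le hx.1] at ht
        exact hderiv t ⟨ht.1, lt_of_le_of_lt ht.2 hx.2⟩
      · exact hgc.intervalIntegrable _ _
    rw [this]
    have : F 0 = 0 := by simp [hF]
    rw [this, sub_zero]
  set H : ℝ → ℝ := fun x => ∫ t in (0:ℝ)..x, g t with hH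
  have hHc : Continuous H :=
    intervalIntegral.continuous_primitive (fun a b => hgc.intervalIntegrable a b) 0
  have hpi := Real.pi_pos
  have hmem : Ioo (0:ℝ) π ∈ 𝓝[<] π := Ioo_mem_nhdsLT_of_mem ⟨hpi, le_refl _⟩
  have heqv : H =ᶠ[𝓝[<] π] F := by
    filter_upwards [hmem] with x hx
    exact hint x ⟨hx.1.le, hx.2⟩
  have htend1 : Tendsto H (𝓝[<] π) (𝓝 (H π)) :=
    (hHc.continuousAt).continuousWithinAt
  have sub1 : Tendsto (fun x : ℝ => x/2) (𝓝[<] π) (𝓝[<] (π/2)) := by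
    apply tendsto_nhdsWithin_of_tendsto_nhds_of_eventually_within
    · exact ((continuous_id.div_const 2).tendsto π).mono_left nhdsWithin_le_nhds
    · filter_upwards [self_mem_nhdsWithin] with x hx
      simp only [mem_Iio] at hx ⊢
      linarith
  have sub2 : Tendsto (fun x : ℝ => Real.tan (x/2)) (𝓝[<] π) atTop :=
    Real.tendsto_tan_pi_div_two.comp sub1
  have sub3 : Tendsto (fun x : ℝ => w * Real.tan (x/2)) (𝓝[<] π) atTop :=
    sub2.const_mul_atTop hkpos
  have sub4 : Tendsto (fun x : ℝ => Real.arctan (w * Real.tan (x/2))) (𝓝[<] π) (𝓝 (π/2)) :=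
    (Real.tendsto_arctan_atTop.mono_right nhdsWithin_le_nhds).comp sub3
  have htend2 : Tendsto F (𝓝[<] π) (𝓝 π) := by
    have h := sub4.const_mul (2:ℝ)
    rw [show (2:ℝ)*(π/2) = π from by ring] at h
    exact h
  have : Tendsto H (𝓝[<] π) (𝓝 π) := htend2.congr' heqv.symm
  exact tendsto_nhds_unique htend1 this

lemma sqrt_upper {y : ℝ} (hy : 0 ≤ y) : Real.sqrt (1 + 3*y^2) ≤ 1 + Real.sqrt 3 * y := by
  rw [Real.sqrt_le_iff]
  constructor
  · nlinarith [Real.sqrt_nonneg 3]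
  · nlinarith [Real.sq_sqrt (by norm_num : (0:ℝ) ≤ 3), Real.sqrt_nonneg 3]

lemma sqrt_lower {y : ℝ} (hy : 0 ≤ y) : 1/2 + 3/2*y ≤ Real.sqrt (1 + 3*y^2) := by
  rw [Real.le_sqrt (by linarith) (by positivity)]
  nlinarith [sq_nonneg (y-1)]

lemma sqrt_lower_gain {y : ℝ} (hy : 0 ≤ y) (hy2 : y ≤ 0.82) :
    1/2 + 3/2*y + 1/200 ≤ Real.sqrt (1 + 3*y^2) := by
  rw [Real.le_sqrt (by linarith) (by positivity)]
  nlinarith [mul_nonneg (by linarith : (0:ℝ) ≤ 0.82 - y) (by linarith : (0:ℝ) ≤ 1 - y)]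

lemma integrand_eq (u t : ℝ) (h1 : 0 ≤ 1 - u^2) :
    Real.sqrt (1 + 3 * (1 - u^2) / (1 + u * Real.cos t)^2)
      = Real.sqrt (1 + 3 * (Real.sqrt (1-u^2) / (1 + u * Real.cos t))^2) := by
  rw [div_pow, Real.sq_sqrt h1, mul_div_assoc]

lemma y_small {u t : ℝ} (hu1 : 2/π ≤ u) (hu2 : |u| < 1) (ht : |t - π/2| ≤ 1/20) :
    Real.sqrt (1-u^2) / (1 + u*Real.cos t) ≤ 0.82 := by
  have hpi := Real.pi_pos
  have hcos : |Real.cos t| ≤ 1/20 := by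
    rw [← Real.sin_pi_div_two_sub]
    calc |Real.sin (π/2 - t)| ≤ |π/2 - t| := Real.abs_sin_le_abs
      _ = |t - π/2| := abs_sub_comm _ _
      _ ≤ 1/20 := ht
  have hd : (19:ℝ)/20 ≤ 1 + u*Real.cos t := by
    have h1 : |u*Real.cos t| ≤ 1/20 := by
      rw [abs_mul]
      nlinarith [abs_nonneg u, abs_nonneg (Real.cos t)]
    linarith [(abs_le.1 h1).1]
  have hu0 : 0 < u := lt_of_lt_of_le (by positivity) hu1
  have hs : Real.sqrt (1-u^2) ≤ 0.7713 := by
    rw [Real.sqrt_le_iff]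
    constructor
    · norm_num
    · have hpil : π < 3.1416 := by linarith [Real.pi_lt_d6]
      have h4 : (2/π)^2 ≤ u^2 := pow_le_pow_left₀ (by positivity) hu1 2
      have h5 : (0.4052:ℝ) ≤ (2/π)^2 := by
        rw [div_pow]
        rw [le_div_iff₀ (by positivity)]
        nlinarith
      nlinarith
  calc Real.sqrt (1-u^2) / (1 + u*Real.cos t) ≤ 0.7713 / (19/20) := by
        apply div_le_div₀ (by norm_num) hs (by norm_num) hd
    _ ≤ 0.82 := by norm_num

lemma cont_integrand {u : ℝ} (hu : |u| < 1) :
    Continuous fun t => Real.sqrt (1 + 3 * (1 - u^2) / (1 + u * Real.cos t)^2) := by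
  apply Real.continuous_sqrt.comp
  apply continuous_const.add
  exact Continuous.div (by continuity) (by continuity)
    (fun t => pow_ne_zero 2 (denom_pos hu t).ne')

lemma usq_le {u : ℝ} (hu : |u| < 1) : 0 ≤ 1 - u^2 := by
  nlinarith [sq_abs u, abs_nonneg u]


lemma base_integral {u : ℝ} (hu : |u| < 1) (c : ℝ) :
    ∫ t in (0:ℝ)..π, (c + (3/2) * (Real.sqrt (1-u^2) / (1 + u * Real.cos t)))
      = c * π + (3/2) * π := by
  have hg := contKey (u := u) hu
  rw [intervalIntegral.integral_add (intervalIntegrable_const)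
      (((show Continuous fun t => (3/2:ℝ) * (Real.sqrt (1-u^2) / (1 + u * Real.cos t)) from continuous_const.mul hg)).intervalIntegrable 0 π),
    intervalIntegral.integral_const_mul, intKey hu, intervalIntegral.integral_const]
  simp [smul_eq_mul]
  ring

lemma upper_integral {u : ℝ} (hu : |u| < 1) :
    ∫ t in (0:ℝ)..π, (1 + Real.sqrt 3 * (Real.sqrt (1-u^2) / (1 + u * Real.cos t)))
      = π + Real.sqrt 3 * π := by
  have hg := contKey (u := u) hu
  rw [intervalIntegral.integral_add (intervalIntegrable_const)
      (((show Continuous fun t => Real.sqrt 3 * (Real.sqrt (1-u^2) / (1 + u * Real.cos t)) from continuous_const.mul hg)).intervalIntegrable 0 π),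
    intervalIntegral.integral_const_mul, intKey hu, intervalIntegral.integral_const]
  simp [smul_eq_mul]

lemma T_upper {u : ℝ} (hu : |u| < 1) :
    (∫ t in (0:ℝ)..π, Real.sqrt (1 + 3 * (1 - u^2) / (1 + u * Real.cos t)^2))
      ≤ (1 + Real.sqrt 3) * π := by
  have hpi := Real.pi_pos
  have hg := contKey (u := u) hu
  have h1 : (∫ t in (0:ℝ)..π, Real.sqrt (1 + 3 * (1 - u^2) / (1 + u * Real.cos t)^2))
      ≤ ∫ t in (0:ℝ)..π, (1 + Real.sqrt 3 * (Real.sqrt (1-u^2) / (1 + u * Real.cos t))) := by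
    apply intervalIntegral.integral_mono_on hpi.le
      ((cont_integrand hu).intervalIntegrable 0 π)
      ((continuous_const.add (continuous_const.mul hg)).intervalIntegrable 0 π)
    intro t ht
    rw [integrand_eq u t (usq_le hu)]
    exact sqrt_upper (div_nonneg (Real.sqrt_nonneg _) (denom_pos hu t).le)
  rw [upper_integral hu] at h1
  linarith

lemma T_lower {u : ℝ} (hu : |u| < 1) :
    2*π ≤ ∫ t in (0:ℝ)..π, Real.sqrt (1 + 3 * (1 - u^2) / (1 + u * Real.cos t)^2) := by
  have hpi := Real.pi_pos
  have hg := contKey (u := u) hu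
  have h1 : (∫ t in (0:ℝ)..π, ((1:ℝ)/2 + (3/2) * (Real.sqrt (1-u^2) / (1 + u * Real.cos t))))
      ≤ ∫ t in (0:ℝ)..π, Real.sqrt (1 + 3 * (1 - u^2) / (1 + u * Real.cos t)^2) := by
    apply intervalIntegral.integral_mono_on hpi.le
      ((continuous_const.add (continuous_const.mul hg)).intervalIntegrable 0 π)
      ((cont_integrand hu).intervalIntegrable 0 π)
    intro t ht
    rw [integrand_eq u t (usq_le hu)]
    have := sqrt_lower (div_nonneg (Real.sqrt_nonneg (1-u^2)) (denom_pos hu t).le)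
    simp only [Pi.add_apply, Pi.mul_apply]; linarith [this]
  rw [base_integral hu (1/2)] at h1
  linarith

lemma T_lower_gain {u : ℝ} (hu : |u| < 1) (hu2 : 2/π ≤ u) :
    2*π + 1/2000 ≤ ∫ t in (0:ℝ)..π, Real.sqrt (1 + 3 * (1 - u^2) / (1 + u * Real.cos t)^2) := by
  have hpi : (3.141592:ℝ) < π := Real.pi_gt_d6
  have hg := contKey (u := u) hu
  set f : ℝ → ℝ := fun t => Real.sqrt (1 + 3 * (1 - u^2) / (1 + u * Real.cos t)^2) with hf
  set base : ℝ → ℝ := fun t => 1/2 + (3/2) * (Real.sqrt (1-u^2) / (1 + u * Real.cos t)) with hbase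
  have hfc : Continuous f := cont_integrand hu
  have hbc : Continuous base := continuous_const.add (continuous_const.mul hg)
  have hpt : ∀ t, base t ≤ f t := by
    intro t
    rw [hf]
    simp only
    rw [integrand_eq u t (usq_le hu)]
    have := sqrt_lower (div_nonneg (Real.sqrt_nonneg (1-u^2)) (denom_pos hu t).le)
    simp only [hbase]
    linarith
  set c1 : ℝ := π/2 - 1/20 with hc1def
  set c2 : ℝ := π/2 + 1/20 with hc2def
  have hc0 : (0:ℝ) ≤ c1 := by rw [hc1def]; linarith
  have hc12 : c1 ≤ c2 := by rw [hc1def, hc2def]; linarith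
  have hc2pi : c2 ≤ π := by rw [hc2def]; linarith
  have hsplitf : (∫ t in (0:ℝ)..π, f t)
      = (∫ t in (0:ℝ)..c1, f t) + (∫ t in c1..c2, f t) + (∫ t in c2..π, f t) := by
    rw [intervalIntegral.integral_add_adjacent_intervals (hfc.intervalIntegrable 0 c1)
      (hfc.intervalIntegrable c1 c2),
      intervalIntegral.integral_add_adjacent_intervals (hfc.intervalIntegrable 0 c2)
      (hfc.intervalIntegrable c2 π)]
  have hsplitb : (∫ t in (0:ℝ)..π, base t)
      = (∫ t in (0:ℝ)..c1, base t) + (∫ t in c1..c2, base t) + (∫ t in c2..π, base t) := by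
    rw [intervalIntegral.integral_add_adjacent_intervals (hbc.intervalIntegrable 0 c1)
      (hbc.intervalIntegrable c1 c2),
      intervalIntegral.integral_add_adjacent_intervals (hbc.intervalIntegrable 0 c2)
      (hbc.intervalIntegrable c2 π)]
  have h1 : (∫ t in (0:ℝ)..c1, base t) ≤ ∫ t in (0:ℝ)..c1, f t :=
    intervalIntegral.integral_mono_on hc0 (hbc.intervalIntegrable 0 c1)
      (hfc.intervalIntegrable 0 c1) (fun t _ => hpt t)
  have h3 : (∫ t in c2..π, base t) ≤ ∫ t in c2..π, f t :=
    intervalIntegral.integral_mono_on hc2pi (hbc.intervalIntegrable c2 π)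
      (hfc.intervalIntegrable c2 π) (fun t _ => hpt t)
  have h2 : (∫ t in c1..c2, base t) + 1/2000 ≤ ∫ t in c1..c2, f t := by
    have hmid : (∫ t in c1..c2, (base t + 1/200)) ≤ ∫ t in c1..c2, f t := by
      apply intervalIntegral.integral_mono_on hc12
        ((hbc.add continuous_const).intervalIntegrable c1 c2)
        (hfc.intervalIntegrable c1 c2)
      intro t ht
      have htw : |t - π/2| ≤ 1/20 := by
        rw [abs_le]
        constructor
        · have := ht.1; rw [hc1def] at this; linarith
        · have := ht.2; rw [hc2def] at this; linarith
      have hy := y_small hu2 hu htw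
      have hy0 : 0 ≤ Real.sqrt (1-u^2) / (1 + u * Real.cos t) :=
        div_nonneg (Real.sqrt_nonneg _) (denom_pos hu t).le
      rw [hf]
      simp only
      rw [integrand_eq u t (usq_le hu)]
      have := sqrt_lower_gain hy0 hy
      simp only [hbase]
      simp only [Pi.add_apply]; linarith
    rw [intervalIntegral.integral_add ((hbc).intervalIntegrable c1 c2)
      (intervalIntegrable_const), intervalIntegral.integral_const] at hmid
    have : (c2 - c1) • ((1:ℝ)/200) = 1/2000 := by
      rw [hc2def, hc1def, smul_eq_mul]
      ring_nf
    rw [this] at hmid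
    exact hmid
  have hbtot : (∫ t in (0:ℝ)..π, base t) = 2*π := by
    have := base_integral hu (1/2)
    rw [hbase]
    rw [this]
    ring
  calc 2*π + 1/2000 = (∫ t in (0:ℝ)..π, base t) + 1/2000 := by rw [hbtot]
    _ = (∫ t in (0:ℝ)..c1, base t) + ((∫ t in c1..c2, base t) + 1/2000)
        + (∫ t in c2..π, base t) := by rw [hsplitb]; ring
    _ ≤ (∫ t in (0:ℝ)..c1, f t) + (∫ t in c1..c2, f t) + (∫ t in c2..π, f t) := by
        linarith
    _ = ∫ t in (0:ℝ)..π, f t := hsplitf.symm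

lemma uFun_abs_lt {ℓ : ℕ} (hℓ : 2 ≤ ℓ) {s : ℝ} (hs : 0 < s) (hs' : s ≤ π/2) :
    |uFun ℓ s| < 1 := by
  have hpi := Real.pi_pos
  have hsin : 0 < Real.sin s := Real.sin_pos_of_pos_of_lt_pi hs (by linarith)
  have hl0 : (0:ℝ) < (ℓ:ℝ) := by exact_mod_cast (by omega : 0 < ℓ)
  have hden : 0 < (ℓ:ℝ) * Real.sin s := mul_pos hl0 hsin
  have hnum : |Real.sin (ℓ * s)| < (ℓ:ℝ) * Real.sin s := by
    rcases lt_or_eq_of_le hs' with h | h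
    · exact abs_sin_nat_mul_lt hℓ hs h
    · have hl2 : (2:ℝ) ≤ (ℓ:ℝ) := by exact_mod_cast hℓ
      calc |Real.sin (ℓ * s)| ≤ 1 := abs_le.mpr ⟨Real.neg_one_le_sin _, Real.sin_le_one _⟩
        _ < (ℓ:ℝ) * Real.sin s := by rw [h, Real.sin_pi_div_two]; linarith
  rw [uFun, abs_div, abs_of_pos hden, div_lt_one hden]
  exact hnum

lemma uFun_lower {ℓ : ℕ} (hℓ : 2 ≤ ℓ) {s : ℝ} (hs : 0 < s) (hs' : s ≤ π/(2*(ℓ:ℝ))) :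
    2/π ≤ uFun ℓ s := by
  have hpi := Real.pi_pos
  have hl0 : (0:ℝ) < (ℓ:ℝ) := by exact_mod_cast (by omega : 0 < ℓ)
  have hls : 0 < (ℓ:ℝ) * s := mul_pos hl0 hs
  have hls2 : (ℓ:ℝ) * s ≤ π/2 := by
    have := mul_le_mul_of_nonneg_left hs' hl0.le
    rw [show (ℓ:ℝ) * (π/(2*(ℓ:ℝ))) = π/2 by field_simp] at this
    linarith
  have h1 : 2/π * ((ℓ:ℝ)*s) ≤ Real.sin ((ℓ:ℝ)*s) := Real.mul_le_sin hls.le hls2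
  have h2 : Real.sin s ≤ s := Real.sin_le hs.le
  have hl1 : (1:ℝ) ≤ (ℓ:ℝ) := by exact_mod_cast (by omega : 1 ≤ ℓ)
  have h3 : π/(2*(ℓ:ℝ)) ≤ π/2 := by
    rw [div_le_div_iff₀ (by positivity) (by norm_num)]
    nlinarith [mul_nonneg hpi.le (sub_nonneg.mpr hl1)]
  have hsin : 0 < Real.sin s := Real.sin_pos_of_pos_of_lt_pi hs (by linarith)
  have hden : 0 < (ℓ:ℝ) * Real.sin s := mul_pos hl0 hsin
  rw [uFun, le_div_iff₀ hden]
  push_cast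
  calc 2/π * ((ℓ:ℝ) * Real.sin s) ≤ 2/π * ((ℓ:ℝ) * s) := by
        apply mul_le_mul_of_nonneg_left _ (by positivity)
        exact mul_le_mul_of_nonneg_left h2 hl0.le
    _ ≤ Real.sin ((ℓ:ℝ)*s) := h1

/-- For every integer `ℓ ≥ 2`, `1 < K_ℓ ≤ (1 + √3)/2`. -/
theorem one_lt_KConst (ℓ : ℕ) (hℓ : 2 ≤ ℓ) :
    1 < KConst ℓ ∧ KConst ℓ ≤ (1 + Real.sqrt 3) / 2 := by
  have hpi := Real.pi_pos
  have hl0 : (0:ℝ) < (ℓ:ℝ) := by exact_mod_cast (by omega : 0 < ℓ)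
  have hl2 : (2:ℝ) ≤ (ℓ:ℝ) := by exact_mod_cast hℓ
  set μ : Measure ℝ := volume.restrict (Ioc 0 π) with hμ
  set ν : Measure ℝ := volume.restrict (Ioc 0 (π/2)) with hν
  set F : ℝ → ℝ → ℝ :=
    fun t s => Real.sqrt (1 + 3 * (1 - uFun ℓ s ^ 2) / (1 + uFun ℓ s * Real.cos t) ^ 2) with hF
  have hFnn : ∀ t s, 0 ≤ F t s := fun t s => Real.sqrt_nonneg _
  have hu : ∀ s ∈ Ioc (0:ℝ) (π/2), |uFun ℓ s| < 1 := fun s hs => uFun_abs_lt hℓ hs.1 hs.2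
  -- measurability
  have humes : Measurable (uFun ℓ) := by
    apply Measurable.div
    · exact Real.measurable_sin.comp (measurable_const_mul _)
    · exact measurable_const.mul Real.measurable_sin
  have hmes : Measurable (Function.uncurry F) := by
    have : Function.uncurry F = fun p : ℝ × ℝ =>
        Real.sqrt (1 + 3 * (1 - uFun ℓ p.2 ^ 2) / (1 + uFun ℓ p.2 * Real.cos p.1) ^ 2) := rfl
    rw [this]
    have hm1 : Measurable fun p : ℝ × ℝ => uFun ℓ p.2 := humes.comp measurable_snd
    apply Real.continuous_sqrt.measurable.comp
    apply Measurable.add measurable_const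
    apply Measurable.div
    · exact measurable_const.mul (measurable_const.sub (hm1.pow_const 2))
    · exact ((measurable_const.add (hm1.mul
        (Real.measurable_cos.comp measurable_fst))).pow_const 2)
  -- integrability on product
  have hInt : Integrable (Function.uncurry F) (μ.prod ν) := by
    rw [integrable_prod_iff' hmes.aestronglyMeasurable]
    constructor
    · rw [hν, ae_restrict_iff' measurableSet_Ioc]
      refine ae_of_all _ fun s hs => ?_
      have hc : Continuous fun t => F t s := cont_integrand (hu s hs)
      rw [hμ]
      exact hc.integrableOn_Ioc
    · apply Integrable.mono' (integrable_const ((1 + Real.sqrt 3) * π))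
      · exact (hmes.stronglyMeasurable.norm.integral_prod_left').aestronglyMeasurable
      · rw [hν, ae_restrict_iff' measurableSet_Ioc]
        refine ae_of_all _ fun s hs => ?_
        simp only [Function.uncurry_apply_pair]
        have heqnorm : (fun t => ‖F t s‖) = fun t => F t s := by
          funext t; rw [Real.norm_eq_abs, abs_of_nonneg (hFnn t s)]
        rw [Real.norm_eq_abs, abs_of_nonneg (integral_nonneg (fun t => norm_nonneg _))]
        calc (∫ t, ‖F t s‖ ∂μ) = ∫ t in (0:ℝ)..π, F t s := by
              rw [heqnorm, hμ, ← intervalIntegral.integral_of_le hpi.le]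
          _ ≤ (1 + Real.sqrt 3) * π := T_upper (hu s hs)
  have hswap := MeasureTheory.integral_integral_swap (f := F) hInt
  set T : ℝ → ℝ := fun s => ∫ t, F t s ∂μ with hT
  have hTint : Integrable T ν := hInt.integral_prod_right
  have hTeq : ∀ s, T s = ∫ t in (0:ℝ)..π, F t s := fun s => by
    rw [intervalIntegral.integral_of_le hpi.le]
  have hTnn : ∀ s, 0 ≤ T s := fun s => integral_nonneg (fun t => hFnn t s)
  -- identify KConst with the swapped integral
  have hKdef : KConst ℓ = (1/π^2) * ∫ s, T s ∂ν := by
    rw [KConst, ← hswap, intervalIntegral.integral_of_le hpi.le, hμ]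
    congr 1
    apply MeasureTheory.integral_congr_ae
    refine ae_of_all _ fun t => ?_
    simp only
    rw [intervalIntegral.integral_of_le (by linarith : (0:ℝ) ≤ π/2), hν]
  have hvol2 : (volume (Ioc (0:ℝ) (π/2))).toReal = π/2 := by
    rw [Real.volume_Ioc, sub_zero, ENNReal.toReal_ofReal (by linarith)]
  -- upper bound
  have hupper : (∫ s, T s ∂ν) ≤ π/2 * ((1 + Real.sqrt 3) * π) := by
    have hb : ‖∫ s in Ioc (0:ℝ) (π/2), T s‖
        ≤ ((1 + Real.sqrt 3) * π) * (volume (Ioc (0:ℝ) (π/2))).toReal := by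
      refine norm_setIntegral_le_of_norm_le_const ?_ ?_
      rotate_left
      · intro s hs
        rw [Real.norm_eq_abs, abs_of_nonneg (hTnn s), hTeq s]
        exact T_upper (hu s hs)
      · rw [Real.volume_Ioc]; exact ENNReal.ofReal_lt_top
    rw [hvol2] at hb
    have h2 : (∫ s, T s ∂ν) ≤ ‖∫ s in Ioc (0:ℝ) (π/2), T s‖ := by
      rw [hν, Real.norm_eq_abs]; exact le_abs_self _
    linarith [h2.trans hb]
  -- lower bound
  set a : ℝ := π/(2*(ℓ:ℝ)) with ha
  have ha0 : 0 < a := by rw [ha]; positivity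
  have ha2 : a ≤ π/4 := by
    rw [ha, div_le_div_iff₀ (by positivity) (by norm_num)]
    nlinarith
  have hapihalf : a ≤ π/2 := by linarith
  have hTon : IntegrableOn T (Ioc (0:ℝ) (π/2)) volume := hTint
  have hint1 : IntegrableOn T (Ioc (0:ℝ) a) volume :=
    hTon.mono_set (Ioc_subset_Ioc_right hapihalf)
  have hint2 : IntegrableOn T (Ioc a (π/2)) volume :=
    hTon.mono_set (Ioc_subset_Ioc_left ha0.le)
  have hdecomp : (∫ s, T s ∂ν)
      = (∫ s in Ioc (0:ℝ) a, T s) + ∫ s in Ioc a (π/2), T s := by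
    rw [hν, ← setIntegral_union (Ioc_disjoint_Ioc_of_le le_rfl) measurableSet_Ioc hint1 hint2,
      Ioc_union_Ioc_eq_Ioc ha0.le hapihalf]
  have hlow1 : (2*π + 1/2000) * a ≤ ∫ s in Ioc (0:ℝ) a, T s := by
    have hconst : (∫ _ in Ioc (0:ℝ) a, (2*π + 1/2000)) = (2*π + 1/2000) * a := by
      rw [setIntegral_const, Real.volume_real_Ioc_of_le ha0.le, sub_zero,
        smul_eq_mul, mul_comm]
    rw [← hconst]
    apply setIntegral_mono_on ((integrableOn_const_iff (C := (2*π + 1/2000 : ℝ))).mpr (Or.inr ?_)) hint1 measurableSet_Ioc ?_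
    · rw [Real.volume_Ioc]; exact ENNReal.ofReal_lt_top
    · intro s hs
      have hs2 : s ∈ Ioc (0:ℝ) (π/2) := ⟨hs.1, hs.2.trans hapihalf⟩
      rw [hTeq s]
      exact T_lower_gain (hu s hs2) (uFun_lower hℓ hs.1 (hs.2.trans_eq ha))
  have hlow2 : 2*π * (π/2 - a) ≤ ∫ s in Ioc a (π/2), T s := by
    have hconst : (∫ _ in Ioc a (π/2), (2*π:ℝ)) = 2*π * (π/2 - a) := by
      rw [setIntegral_const, Real.volume_real_Ioc_of_le (by linarith),
        smul_eq_mul, mul_comm]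
    rw [← hconst]
    apply setIntegral_mono_on ((integrableOn_const_iff (C := (2*π : ℝ))).mpr (Or.inr ?_)) hint2 measurableSet_Ioc ?_
    · rw [Real.volume_Ioc]; exact ENNReal.ofReal_lt_top
    · intro s hs
      have hs2 : s ∈ Ioc (0:ℝ) (π/2) := ⟨ha0.trans hs.1, hs.2⟩
      rw [hTeq s]
      exact T_lower (hu s hs2)
  have hlowtot : π^2 < ∫ s, T s ∂ν := by
    rw [hdecomp]
    nlinarith
  have hπ2 : (0:ℝ) < π^2 := by positivity
  constructor
  · rw [hKdef]
    calc (1:ℝ) = (1/π^2) * π^2 := by field_simp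
      _ < (1/π^2) * ∫ s, T s ∂ν := by
          apply mul_lt_mul_of_pos_left hlowtot (by positivity)
  · rw [hKdef]
    calc (1/π^2) * (∫ s, T s ∂ν) ≤ (1/π^2) * (π/2 * ((1 + Real.sqrt 3) * π)) :=
        mul_le_mul_of_nonneg_left hupper (by positivity)
      _ = (1 + Real.sqrt 3) / 2 := by field_simp
end

section
/- Fix an integer ℓ ≥ 2 and define h_ℓ(x) = (u_ℓ(x) cos x − cos(ℓx)) / (sin x · √(1 − u_ℓ(x)²)) for x ∈ (0, π/(2ℓ)]. Then 0 ≤ h_ℓ(x) ≤ (ℓ² − 2)/2 for all x ∈ (0, π/(2ℓ)]. -/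
open Real

private lemma nonneg_of_deriv' (f f' : ℝ → ℝ) (hd : ∀ s, HasDerivAt f (f' s) s)
    (h0 : f 0 = 0) (hf' : ∀ s, 0 < s → 0 ≤ f' s) {t : ℝ} (ht : 0 ≤ t) : 0 ≤ f t := by
  have hmono : MonotoneOn f (Set.Ici (0:ℝ)) := by
    apply monotoneOn_of_deriv_nonneg (convex_Ici 0)
      (fun s _ => (hd s).continuousAt.continuousWithinAt)
      (fun s _ => ((hd s).differentiableAt).differentiableWithinAt)
    intro s hs
    rw [interior_Ici] at hs
    rw [(hd s).deriv]
    exact hf' s hs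
  have h := hmono Set.self_mem_Ici ht ht
  rw [h0] at h; exact h

lemma sin_ge_cubic' {t : ℝ} (ht : 0 ≤ t) : t - t^3/6 ≤ Real.sin t := by
  have h := nonneg_of_deriv' (fun y => Real.sin y - (y - y^3/6))
      (fun y => Real.cos y - (1 - y^2/2)) (fun s => by
        have : HasDerivAt (fun y : ℝ => Real.sin y - (y - y^3/6))
            (Real.cos s - (1 - (3:ℕ)*s^(3-1)/6)) s :=
          (Real.hasDerivAt_sin s).sub ((hasDerivAt_id' s).sub
            ((hasDerivAt_pow 3 s).div_const 6))
        convert this using 1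
        norm_num; ring)
      (by simp) (fun s _ => by
        have := Real.one_sub_sq_div_two_le_cos (x := s); linarith) ht
  simpa using h

lemma cos_le_quartic' {t : ℝ} (ht : 0 ≤ t) : Real.cos t ≤ 1 - t^2/2 + t^4/24 := by
  have h := nonneg_of_deriv' (fun y => (1 - y^2/2 + y^4/24) - Real.cos y)
      (fun y => (-(y) + y^3/6) + Real.sin y) (fun s => by
        have : HasDerivAt (fun y : ℝ => (1 - y^2/2 + y^4/24) - Real.cos y)
            ((0 - (2:ℕ)*s^(2-1)/2 + (4:ℕ)*s^(4-1)/24) - (-Real.sin s)) s :=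
          (((hasDerivAt_const s (1:ℝ)).sub ((hasDerivAt_pow 2 s).div_const 2)).add
            ((hasDerivAt_pow 4 s).div_const 24)).sub (Real.hasDerivAt_cos s)
        convert this using 1
        norm_num; ring)
      (by norm_num) (fun s hs => by
        have := sin_ge_cubic' hs.le; linarith) ht
  linarith

lemma sin_le_quintic' {t : ℝ} (ht : 0 ≤ t) : Real.sin t ≤ t - t^3/6 + t^5/120 := by
  have h := nonneg_of_deriv' (fun y => (y - y^3/6 + y^5/120) - Real.sin y)
      (fun y => (1 - y^2/2 + y^4/24) - Real.cos y) (fun s => by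
        have : HasDerivAt (fun y : ℝ => (y - y^3/6 + y^5/120) - Real.sin y)
            ((1 - (3:ℕ)*s^(3-1)/6 + (5:ℕ)*s^(5-1)/120) - Real.cos s) s :=
          (((hasDerivAt_id' s).sub ((hasDerivAt_pow 3 s).div_const 6)).add
            ((hasDerivAt_pow 5 s).div_const 120)).sub (Real.hasDerivAt_sin s)
        convert this using 1
        norm_num; ring)
      (by norm_num) (fun s hs => by
        have := cos_le_quartic' hs.le; linarith) ht
  linarith

lemma mul_sin_le_mul_sin {a b : ℝ} (ha : 0 ≤ a) (hab : a ≤ b) (hb : b ≤ π) :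
    a * Real.sin b ≤ b * Real.sin a := by
  rcases eq_or_lt_of_le (ha.trans hab) with hb0 | hb0
  · have ha0 : a = 0 := le_antisymm (hab.trans hb0.symm.le) ha
    simp [← hb0, ha0]
  have key := strictConcaveOn_sin_Icc.concaveOn.2
      (Set.mem_Icc.mpr ⟨le_refl 0, Real.pi_pos.le⟩)
      (Set.mem_Icc.mpr ⟨(ha.trans hab), hb⟩)
      (show (0:ℝ) ≤ 1 - a/b by rw [sub_nonneg]; exact div_le_one_of_le₀ hab hb0.le)
      (show (0:ℝ) ≤ a/b by positivity) (show 1 - a/b + a/b = 1 by ring)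
  simp only [smul_eq_mul, mul_zero, zero_add, Real.sin_zero] at key
  rw [div_mul_cancel₀ _ hb0.ne'] at key
  have key2 := mul_le_mul_of_nonneg_left key hb0.le
  have heq : b * (a / b * Real.sin b) = a * Real.sin b := by field_simp
  linarith [key2, heq.ge]

private lemma ppoly (L : ℝ) (hm : 0 ≤ L - 3) :
    ((L-1)*(L+1)^3/12)^2
      ≤ ((L^2-2)/2)^2 * (954/1000)^2 * (1542/1000) * L^2 * ((L^2-1)/6 - L^2*(987/48000)) := by
  obtain ⟨m, hm0, rfl⟩ : ∃ m, 0 ≤ m ∧ L = m + 3 := ⟨L - 3, hm, by ring⟩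
  have expand : (((m+3)^2-2)/2)^2 * (954/1000)^2 * (1542/1000) * (m+3)^2
        * (((m+3)^2-1)/6 - (m+3)^2*(987/48000))
      - (((m+3)-1)*((m+3)+1)^3/12)^2
    = (4599944054484469/72000000000000) + (308480783775439/1125000000000)*m
      + (3994641671624471/9000000000000)*m^2 + (3380700213531937/9000000000000)*m^3
      + (6718422304674067/36000000000000)*m^4 + (25443225357209/450000000000)*m^5
      + (92637397286531/9000000000000)*m^6 + (9322290825503/9000000000000)*m^7
      + (3190763608501/72000000000000)*m^8 := by ring
  nlinarith [expand, pow_nonneg hm0 2, pow_nonneg hm0 3, pow_nonneg hm0 4, pow_nonneg hm0 5,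
    pow_nonneg hm0 6, pow_nonneg hm0 7, pow_nonneg hm0 8]

/-- `h_ℓ(x) = (u_ℓ(x) cos x − cos(ℓx)) / (sin x √(1 − u_ℓ(x)²))`. -/
noncomputable def hFun (ℓ : ℕ) (x : ℝ) : ℝ :=
  (uFun ℓ x * Real.cos x - Real.cos (ℓ * x)) / (Real.sin x * Real.sqrt (1 - uFun ℓ x ^ 2))

set_option maxHeartbeats 2000000

/-- For every integer `ℓ ≥ 2` and every `x ∈ (0, π/(2ℓ)]`, `0 ≤ h_ℓ(x) ≤ (ℓ² − 2)/2`. -/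
theorem hFun_nonneg_and_le (ℓ : ℕ) (hℓ : 2 ≤ ℓ) (x : ℝ)
    (hx : x ∈ Set.Ioc (0:ℝ) (π / (2 * ℓ))) :
    0 ≤ hFun ℓ x ∧ hFun ℓ x ≤ ((ℓ : ℝ) ^ 2 - 2) / 2 := by
  obtain ⟨hx0, hxu⟩ := hx
  set L : ℝ := (ℓ : ℝ) with hLdef
  have hL2 : (2:ℝ) ≤ L := by rw [hLdef]; exact_mod_cast hℓ
  have hL0 : (0:ℝ) < L := by linarith
  have hπu : π < 31416/10000 := by linarith [Real.pi_lt_d6]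
  have hπl : (31415/10000:ℝ) < π := by linarith [Real.pi_gt_d6]
  have hx2L : x * (2 * L) ≤ π := (le_div_iff₀ (by positivity)).mp hxu
  have hLx : L * x ≤ π / 2 := by linarith [hx2L]
  have h4x : 0 ≤ x * (2*L - 4) := mul_nonneg hx0.le (by linarith)
  have hxπ : x < π := by linarith [h4x, hx2L, Real.pi_pos]
  have hS : 0 < Real.sin x := Real.sin_pos_of_pos_of_lt_pi hx0 hxπ
  have hLx0 : 0 < L * x := by positivity
  have hs0 : 0 < Real.sin (L * x) :=
    Real.sin_pos_of_pos_of_lt_pi hLx0 (by linarith [Real.pi_pos])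
  rcases eq_or_lt_of_le hℓ with h2 | h3
  · -- ℓ = 2
    have hL : L = 2 := by rw [hLdef, ← h2]; norm_num
    have hu : uFun ℓ x = Real.cos x := by
      unfold uFun
      rw [← hLdef, hL, Real.sin_two_mul]
      field_simp
    have hsq : 1 - uFun ℓ x ^ 2 = Real.sin x ^ 2 := by
      rw [hu]; nlinarith [Real.sin_sq_add_cos_sq x]
    have hh : hFun ℓ x = 1 := by
      unfold hFun
      rw [hsq, Real.sqrt_sq hS.le, hu, ← hLdef, hL, Real.cos_two_mul]
      rw [div_eq_one_iff_eq (by positivity)]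
      nlinarith [Real.sin_sq_add_cos_sq x]
    rw [hh, hL]
    norm_num
  · -- ℓ ≥ 3
    have hL3 : (3:ℝ) ≤ L := by
      have h3' : (3:ℕ) ≤ ℓ := h3
      rw [hLdef]; exact_mod_cast h3'
    have h6x : 0 ≤ x * (2*L - 6) := mul_nonneg hx0.le (by linarith)
    have hx6 : x ≤ 5236/10000 := by linarith [h6x, hx2L, hπu]
    -- basic sin bounds
    have hSc : x - x^3/6 ≤ Real.sin x := sin_ge_cubic' hx0.le
    have hsc : L*x - (L*x)^3/6 ≤ Real.sin (L*x) := sin_ge_cubic' hLx0.le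
    have hsq5 : Real.sin (L*x) ≤ L*x - (L*x)^3/6 + (L*x)^5/120 := sin_le_quintic' hLx0.le
    have hx2 : x^2 ≤ (27415696/100000000:ℝ) := by
      have := mul_self_le_mul_self hx0.le hx6; nlinarith only [this]
    have hx3 : x^3 ≤ (27415696/100000000:ℝ) * x := by
      have := mul_le_mul_of_nonneg_right hx2 hx0.le; nlinarith only [this]
    have hSx : (954/1000) * x ≤ Real.sin x := by linarith only [hx3, hSc, hx0]
    have hLxc : L * x ≤ 15708/10000 := by linarith [hLx, hπu]
    have hLx2 : (L*x)^2 ≤ (987:ℝ)/400 := by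
      have := mul_self_le_mul_self hLx0.le hLxc; nlinarith only [this]
    have hLx3 : (L*x)^3 ≤ (987/400) * (L*x) := by
      have := mul_le_mul_of_nonneg_left hLx2 hLx0.le; nlinarith only [this]
    have hsx : (588/1000) * (L*x) ≤ Real.sin (L*x) := by linarith only [hLx3, hsc, hLx0]
    set S := Real.sin x with hSdef
    set s := Real.sin (L*x) with hsdef
    set c := Real.cos (L*x) with hcdef
    -- gap bound
    set c₁ : ℝ := (L^2 - 1)/6 - L^2 * (987/48000) with hc₁def
    have hL9 : (9:ℝ) ≤ L^2 := by nlinarith [hL3]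
    have hc₁ : 0 < c₁ := by rw [hc₁def]; linarith only [hL9, hL3]
    have hgap : L * x^3 * c₁ ≤ L * S - s := by
      have hp3 : (0:ℝ) ≤ (L*x)^3 := by positivity
      have h5 : (L*x)^3 * (L*x)^2 ≤ (L*x)^3 * (987/400) := mul_le_mul_of_nonneg_left hLx2 hp3
      have hLS : L * (x - x^3/6) ≤ L * S := mul_le_mul_of_nonneg_left hSc hL0.le
      rw [hc₁def]; linarith only [h5, hLS, hsq5]
    have hgap0 : 0 < L * x^3 * c₁ := by positivity
    have hlt : s < L * S := by linarith only [hgap, hgap0]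
    -- u facts
    have hu : uFun ℓ x = s / (L * S) := rfl
    have hu0 : 0 < uFun ℓ x := by rw [hu]; positivity
    have hu1 : uFun ℓ x < 1 := by rw [hu, div_lt_one (by positivity)]; exact hlt
    have h1u : 0 < 1 - uFun ℓ x ^ 2 := by
      nlinarith only [mul_pos (sub_pos.mpr hu1) (show 0 < 1 + uFun ℓ x by linarith only [hu0])]
    set R := Real.sqrt (1 - uFun ℓ x ^ 2) with hRdef
    have hR0 : 0 < R := Real.sqrt_pos.mpr h1u
    have hR2 : R^2 = 1 - uFun ℓ x ^ 2 := Real.sq_sqrt h1u.le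
    -- A and its bounds
    set A : ℝ := s * Real.cos x - L * S * c with hAdef
    have hsin_sub : Real.sin (L*x - x) = s * Real.cos x - c * S := Real.sin_sub _ _
    have hsin_add : Real.sin (L*x + x) = s * Real.cos x + c * S := Real.sin_add _ _
    have haux0 : 0 ≤ (L - 1) * x := mul_nonneg (by linarith) hx0.le
    have hconc : (L*x - x) * Real.sin (L*x + x) ≤ (L*x + x) * Real.sin (L*x - x) :=
      mul_sin_le_mul_sin (by linarith only [haux0]) (by linarith only [hx0])
        (by linarith only [hLx, hx6, hπl])
    have h1 : (L - 1) * Real.sin (L*x + x) ≤ (L + 1) * Real.sin (L*x - x) := by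
      have hmul : x * ((L - 1) * Real.sin (L*x + x)) ≤ x * ((L + 1) * Real.sin (L*x - x)) := by
        linarith only [hconc]
      exact le_of_mul_le_mul_left hmul hx0
    rw [hsin_sub, hsin_add] at h1
    have hA0 : 0 ≤ A := by rw [hAdef]; linarith only [h1]
    have hA_ub : A ≤ (L-1)*(L+1)^3 * x^3 / 12 := by
      have ha1 : Real.sin (L*x - x) ≤ L*x - x := Real.sin_le (by linarith only [haux0])
      have ha2 : (L*x + x) - (L*x + x)^3/6 ≤ Real.sin (L*x + x) := sin_ge_cubic' (by positivity)
      have ha3 : (L - 1) * ((L*x + x) - (L*x + x)^3/6) ≤ (L - 1) * Real.sin (L*x + x) :=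
        mul_le_mul_of_nonneg_left ha2 (by linarith)
      have ha4 : (L + 1) * Real.sin (L*x - x) ≤ (L + 1) * (L*x - x) :=
        mul_le_mul_of_nonneg_left ha1 (by linarith)
      rw [hsin_add] at ha3
      rw [hsin_sub] at ha4
      rw [hAdef]; linarith only [ha3, ha4]
    -- key inequality
    set K : ℝ := (L^2 - 2)/2 with hKdef
    have hK0 : 0 < K := by rw [hKdef]; linarith [hL9]
    have Ppoly : ((L-1)*(L+1)^3/12)^2 ≤ K^2 * (954/1000)^2 * (1542/1000) * L^2 * c₁ := by
      rw [hKdef, hc₁def]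
      have := ppoly L (by linarith)
      linarith only [this]
    have hKey : A^2 ≤ K^2 * S^2 * (L^2 * S^2 - s^2) := by
      have hA2 : A^2 ≤ ((L-1)*(L+1)^3/12)^2 * x^6 := by
        have := pow_le_pow_left₀ hA0 hA_ub 2
        linarith only [this]
      have hLSx : L * ((954/1000) * x) ≤ L * S := mul_le_mul_of_nonneg_left hSx hL0.le
      have hsum : (1542/1000) * (L*x) ≤ L * S + s := by linarith only [hLSx, hsx]
      have hprod : (L * x^3 * c₁) * ((1542/1000) * (L*x)) ≤ (L*S - s) * (L*S + s) :=
        mul_le_mul hgap hsum (by positivity) (by linarith only [hlt])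
      have hS2 : ((954/1000) * x)^2 ≤ S^2 := pow_le_pow_left₀ (by positivity) hSx 2
      have hlow : (1542/1000) * L^2 * c₁ * x^4 ≤ L^2 * S^2 - s^2 := by linarith only [hprod]
      have hm1 : ((954/1000) * x)^2 * ((1542/1000) * L^2 * c₁ * x^4)
          ≤ S^2 * (L^2 * S^2 - s^2) :=
        mul_le_mul hS2 hlow (by positivity) (sq_nonneg S)
      have hm2 := mul_le_mul_of_nonneg_left hm1 (sq_nonneg K)
      have hm3 := mul_le_mul_of_nonneg_right Ppoly (pow_nonneg hx0.le 6)
      calc A^2 ≤ ((L-1)*(L+1)^3/12)^2 * x^6 := hA2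
        _ ≤ (K^2 * (954/1000)^2 * (1542/1000) * L^2 * c₁) * x^6 := hm3
        _ = K^2 * (((954/1000) * x)^2 * ((1542/1000) * L^2 * c₁ * x^4)) := by ring
        _ ≤ K^2 * (S^2 * (L^2 * S^2 - s^2)) := hm2
        _ = K^2 * S^2 * (L^2 * S^2 - s^2) := by ring
    -- numerator
    set N : ℝ := uFun ℓ x * Real.cos x - c with hNdef
    have hLS0 : 0 < L * S := by positivity
    have hA_eq : A = N * (L * S) := by
      rw [hNdef, hAdef, hu]
      field_simp
    have hN0 : 0 ≤ N := by
      rcases le_or_gt 0 N with h | h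
      · exact h
      · exfalso; nlinarith only [mul_pos (neg_pos.mpr h) hLS0, hA0, hA_eq]
    have hs_eq : s = uFun ℓ x * (L * S) := by rw [hu]; field_simp
    have hN2 : N^2 ≤ (K * (S * R))^2 := by
      rw [hA_eq] at hKey
      rw [hs_eq] at hKey
      have expand : (K * (S * R))^2 = K^2 * S^2 * (1 - uFun ℓ x ^2) := by
        rw [mul_pow, mul_pow, hR2]; ring
      have hLS2 : (0:ℝ) < L^2 * S^2 := by positivity
      have key2 : N^2 * (L^2 * S^2) ≤ (K^2 * S^2 * (1 - uFun ℓ x ^2)) * (L^2 * S^2) := by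
        linarith only [hKey]
      rw [expand]
      exact le_of_mul_le_mul_right key2 hLS2
    have hNle : N ≤ K * (S * R) :=
      le_of_pow_le_pow_left₀ (two_ne_zero) (by positivity) hN2
    have hD : 0 < S * R := mul_pos hS hR0
    constructor
    · exact div_nonneg hN0 hD.le
    · show N / (S * R) ≤ (L^2 - 2)/2
      rw [div_le_iff₀ hD]
      calc N ≤ K * (S * R) := hNle
        _ = (L^2 - 2)/2 * (S * R) := by rw [hKdef]
end

section
/- Fix an integer ℓ ≥ 2 and c ∈ (0, 1). There exist M > 0 and N ∈ ℕ such that for all n ≥ N, ∫₀^{n^{−c}} √(1 − u_ℓ(x)²) / (1 + u_ℓ(x) cos(nx)) dx ≤ M n^{−c}. -/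
open Real

namespace IntegralNearZeroAux

lemma sin_upper {x : ℝ} (hx : 0 ≤ x) (k : ℕ) (hk : 2 ≤ k) (hkx : (k:ℝ) * x ≤ 1) :
    Real.sin (k * x) ≤ k * Real.sin x * Real.cos x := by
  induction k, hk using Nat.le_induction with
  | base =>
    push_cast at hkx ⊢
    rw [Real.sin_two_mul]
  | succ k hk ih =>
    push_cast at hkx ⊢
    have hk1 : (1:ℝ) ≤ k := by exact_mod_cast hk.trans' (by norm_num)
    have hx1 : x ≤ 1 := by nlinarith
    have hkx' : (k:ℝ) * x ≤ 1 := by nlinarith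
    have hxk : x ≤ (k:ℝ) * x := by nlinarith
    have hpi : (3:ℝ) < π := by have := Real.pi_gt_d6; linarith
    have hsx : 0 ≤ Real.sin x := Real.sin_nonneg_of_nonneg_of_le_pi hx (by linarith)
    have hcx : 0 ≤ Real.cos x := Real.cos_nonneg_of_mem_Icc ⟨by linarith, by linarith⟩
    have hcx1 : Real.cos x ≤ 1 := Real.cos_le_one x
    have hckx : Real.cos ((k:ℝ) * x) ≤ Real.cos x :=
      Real.cos_le_cos_of_nonneg_of_le_pi hx (by linarith) hxk
    have hexp : ((k:ℝ) + 1) * x = (k:ℝ) * x + x := by ring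
    rw [hexp, Real.sin_add]
    nlinarith [mul_le_mul_of_nonneg_right (ih (by push_cast; nlinarith)) hcx,
      mul_le_mul_of_nonneg_right hckx hsx, mul_nonneg hsx hcx,
      mul_nonneg (mul_nonneg (by linarith : (0:ℝ) ≤ (k:ℝ)) (mul_nonneg hsx hcx))
        (sub_nonneg.2 hcx1)]

lemma sin_lower {x : ℝ} (hx : 0 ≤ x) (k : ℕ) (hk : 1 ≤ k) (hkx : (k:ℝ) * x ≤ 1) :
    (k:ℝ) * Real.sin x * Real.cos ((k:ℝ) * x) ≤ Real.sin ((k:ℝ) * x) := by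
  induction k, hk using Nat.le_induction with
  | base =>
    push_cast at hkx ⊢
    simp only [one_mul]
    nlinarith [Real.sin_nonneg_of_nonneg_of_le_pi hx (by nlinarith [Real.pi_gt_d6] : x ≤ π),
      Real.cos_le_one x]
  | succ k hk ih =>
    push_cast at hkx ⊢
    have hk1 : (1:ℝ) ≤ k := by exact_mod_cast hk
    have hx1 : x ≤ 1 := by nlinarith
    have hkx' : (k:ℝ) * x ≤ 1 := by nlinarith
    have hkx0 : 0 ≤ (k:ℝ) * x := by positivity
    have hpi : (3:ℝ) < π := by have := Real.pi_gt_d6; linarith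
    have hsx : 0 ≤ Real.sin x := Real.sin_nonneg_of_nonneg_of_le_pi hx (by linarith)
    have hcx : 0 ≤ Real.cos x := Real.cos_nonneg_of_mem_Icc ⟨by linarith, by linarith⟩
    have hcx1 : Real.cos x ≤ 1 := Real.cos_le_one x
    have hskx : 0 ≤ Real.sin ((k:ℝ) * x) :=
      Real.sin_nonneg_of_nonneg_of_le_pi hkx0 (by linarith)
    have hckx : 0 ≤ Real.cos ((k:ℝ) * x) :=
      Real.cos_nonneg_of_mem_Icc ⟨by linarith, by linarith⟩
    have hexp : ((k:ℝ) + 1) * x = (k:ℝ) * x + x := by ring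
    rw [hexp, Real.sin_add, Real.cos_add]
    nlinarith [mul_le_mul_of_nonneg_right (ih (by push_cast; nlinarith)) hcx,
      mul_nonneg (mul_nonneg hsx hckx) (sub_nonneg.2 hcx1),
      mul_nonneg (by linarith : (0:ℝ) ≤ (k:ℝ) + 1)
        (mul_nonneg hskx (mul_nonneg hsx hsx))]

lemma u_bounds {ℓ : ℕ} (hℓ : 2 ≤ ℓ) {x : ℝ} (hx : 0 < x) (hx1 : (ℓ:ℝ) * x ≤ 1) :
    Real.cos ((ℓ:ℝ) * x) ≤ uFun ℓ x ∧ uFun ℓ x ≤ Real.cos x := by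
  have hℓ1 : (1:ℝ) ≤ (ℓ:ℝ) := by exact_mod_cast hℓ.trans' (by norm_num)
  have hx1' : x ≤ 1 := by nlinarith
  have hpi : (3:ℝ) < π := by have := Real.pi_gt_d6; linarith
  have hsx : 0 < Real.sin x := Real.sin_pos_of_pos_of_lt_pi hx (by linarith)
  have hden : 0 < (ℓ:ℝ) * Real.sin x := by positivity
  constructor
  · rw [uFun, le_div_iff₀ hden]
    have := sin_lower hx.le ℓ (by omega) hx1
    nlinarith
  · rw [uFun, div_le_iff₀ hden]
    have := sin_upper hx.le ℓ hℓ hx1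
    nlinarith

lemma hasDerivAt_G {β : ℝ} (hβ0 : 0 ≤ β) (hβ1 : β < 1) (y : ℝ) :
    HasDerivAt (fun θ : ℝ => θ - 2 * Real.arctan (β * Real.sin θ / (1 + β * Real.cos θ)))
      ((1 - β^2) / (1 + β^2 + 2*β*Real.cos y)) y := by
  have hD : 0 < 1 + β * Real.cos y := by nlinarith [Real.neg_one_le_cos y, Real.cos_le_one y]
  have h1 : HasDerivAt (fun θ : ℝ => β * Real.sin θ) (β * Real.cos y) y :=
    (Real.hasDerivAt_sin y).const_mul β
  have h2 : HasDerivAt (fun θ : ℝ => 1 + β * Real.cos θ) (β * (-Real.sin y)) y :=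
    ((Real.hasDerivAt_cos y).const_mul β).const_add 1
  have hq := h1.div h2 hD.ne'
  have ha := Real.hasDerivAt_arctan (β * Real.sin y / (1 + β * Real.cos y))
  have h := (hasDerivAt_id y).sub ((ha.comp y hq).const_mul 2)
  refine h.congr_deriv ?_
  symm
  have hsc : Real.sin y ^ 2 + Real.cos y ^ 2 = 1 := Real.sin_sq_add_cos_sq y
  have hE : 0 < 1 + β^2 + 2*β*Real.cos y := by nlinarith [Real.neg_one_le_cos y]
  have hQ : 0 < 1 + (β * Real.sin y / (1 + β * Real.cos y))^2 := by positivity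
  have hs2 : Real.sin y ^ 2 = 1 - Real.cos y ^ 2 := by linarith
  field_simp
  rw [div_eq_iff (ne_of_gt (by linarith))]
  linear_combination (β^2*(2+2*β*Real.cos y)) * hsc

lemma beta_id {v w cq : ℝ} (hw2 : w^2 = 1 - v^2) (hwpos : 0 < w)
    (hvc : 0 < 1 + v*cq) (hE : 0 < 1 + (v/(1+w))^2 + 2*(v/(1+w))*cq) :
    (1 - (v/(1+w))^2) / (1 + (v/(1+w))^2 + 2*(v/(1+w))*cq) = w / (1 + v*cq) := by
  have h1w : (0:ℝ) < 1 + w := by linarith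
  rw [div_eq_div_iff hE.ne' hvc.ne']
  field_simp
  linear_combination (-(1+v*cq+w)) * hw2

lemma beta_id' {v w β cq : ℝ} (hβ : β = v/(1+w)) (hw2 : w^2 = 1 - v^2) (hwpos : 0 < w)
    (hvc : 0 < 1 + v*cq) (hE : 0 < 1 + β^2 + 2*β*cq) :
    (1 - β^2) / (1 + β^2 + 2*β*cq) = w / (1 + v*cq) := by
  subst hβ; exact beta_id hw2 hwpos hvc hE

lemma integral_period {v : ℝ} (hv0 : 0 ≤ v) (hv1 : v < 1) {n : ℕ} (hn : 1 ≤ n) (a : ℝ) :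
    ∫ x in a..(a + 2*π/n), Real.sqrt (1 - v^2) / (1 + v * Real.cos (n*x)) = 2*π/n := by
  have hnR : (0:ℝ) < n := by exact_mod_cast hn
  have hw2 : (Real.sqrt (1 - v^2))^2 = 1 - v^2 := Real.sq_sqrt (by nlinarith)
  have hwpos : 0 < Real.sqrt (1 - v^2) := Real.sqrt_pos.2 (by nlinarith)
  set w : ℝ := Real.sqrt (1 - v^2)
  set β : ℝ := v / (1 + w) with hβ
  have hβ0 : 0 ≤ β := div_nonneg hv0 (by linarith)
  have hβ1 : β < 1 := by rw [hβ, div_lt_one (by linarith)]; nlinarith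
  have key : ∀ x : ℝ, HasDerivAt (fun x : ℝ => (1/(n:ℝ)) *
      ((n*x) - 2 * Real.arctan (β * Real.sin (n*x) / (1 + β * Real.cos (n*x)))))
      (w / (1 + v * Real.cos (n*x))) x := by
    intro x
    have hG := hasDerivAt_G hβ0 hβ1 ((n:ℝ)*x)
    have hlin : HasDerivAt (fun x : ℝ => (n:ℝ)*x) n x := by
      simpa using (hasDerivAt_id x).const_mul (n:ℝ)
    have hcomp := (hG.comp x hlin).const_mul (1/(n:ℝ))
    have hvc : 0 < 1 + v * Real.cos ((n:ℝ)*x) := by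
      nlinarith [Real.neg_one_le_cos ((n:ℝ)*x), Real.cos_le_one ((n:ℝ)*x)]
    have hE : 0 < 1 + β^2 + 2*β*Real.cos ((n:ℝ)*x) := by
      nlinarith [Real.neg_one_le_cos ((n:ℝ)*x)]
    refine hcomp.congr_deriv ?_
    rw [← beta_id' hβ hw2 hwpos hvc hE]
    field_simp
  have hcont : Continuous fun x : ℝ => w / (1 + v * Real.cos ((n:ℝ)*x)) := by
    refine Continuous.div continuous_const
      (continuous_const.add (continuous_const.mul
        (Real.continuous_cos.comp (continuous_const.mul continuous_id)))) ?_
    intro x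
    nlinarith [Real.neg_one_le_cos ((n:ℝ)*x), Real.cos_le_one ((n:ℝ)*x)]
  have hFTC := intervalIntegral.integral_eq_sub_of_hasDerivAt
    (f' := fun x => w / (1 + v * Real.cos ((n:ℝ)*x)))
    (a := a) (b := a + 2*π/n) (fun x _ => key x)
    (hcont.intervalIntegrable _ _)
  rw [hFTC]
  have hend : (n:ℝ) * (a + 2*π/n) = n*a + 2*π := by field_simp
  rw [hend, Real.sin_add_two_pi, Real.cos_add_two_pi]
  field_simp
  ring

set_option maxHeartbeats 1000000 in
lemma pointwise_bound {ℓ n : ℕ} (hℓ : 2 ≤ ℓ) (hn : 1 ≤ n) {a x : ℝ}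
    (ha : 0 ≤ a) (hbl : (ℓ:ℝ) * (a + 2*π/n) ≤ 1)
    (hx0 : 0 < x) (hxa : a ≤ x) (hxb : x ≤ a + 2*π/n) :
    Real.sqrt (1 - uFun ℓ x ^ 2) / (1 + uFun ℓ x * Real.cos (n * x)) ≤
      (62 * (ℓ:ℝ)^2) * (Real.sqrt (1 - (Real.cos ((ℓ:ℝ) * (a + 2*π/n)))^2) /
        (1 + Real.cos ((ℓ:ℝ) * (a + 2*π/n)) * Real.cos (n * x))) := by
  have hnR : (0:ℝ) < n := by exact_mod_cast hn
  have hpi : (3:ℝ) < π := by have := Real.pi_gt_d6; linarith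
  have hpi' : π < 3.1416 := by have := Real.pi_lt_d6; linarith
  have hℓ1 : (2:ℝ) ≤ (ℓ:ℝ) := by exact_mod_cast hℓ
  have h2pin : 0 < 2*π/n := by positivity
  set b : ℝ := a + 2*π/n with hbdef
  have hb0 : 0 < b := by rw [hbdef]; linarith
  have hb2 : 2*π/n = b - a := by rw [hbdef]; ring
  have hxℓ : (ℓ:ℝ) * x ≤ 1 := by nlinarith
  obtain ⟨hu1, hu2⟩ := u_bounds hℓ hx0 hxℓ
  set u : ℝ := uFun ℓ x with hu
  set v : ℝ := Real.cos ((ℓ:ℝ) * b) with hvdef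
  set cq : ℝ := Real.cos ((n:ℝ) * x) with hcq
  clear_value b u v cq
  have hx1 : x ≤ 1 := by nlinarith
  have hℓb0 : 0 < (ℓ:ℝ) * b := by positivity
  have hℓb1 : (ℓ:ℝ) * b ≤ 1 := hbl
  have hv0 : 0 < v := by
    rw [hvdef]
    exact Real.cos_pos_of_mem_Ioo ⟨by linarith, by linarith⟩
  have hvu : v ≤ u := by
    rw [hvdef]
    refine le_trans ?_ hu1
    exact Real.cos_le_cos_of_nonneg_of_le_pi (by positivity) (by linarith) (by nlinarith)
  have hcosx : Real.cos x ≤ 1 - 2/π^2 * x^2 := Real.cos_le_one_sub_mul_cos_sq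
    (by rw [abs_of_nonneg hx0.le]; linarith)
  have hπ2 : π^2 < 9.88 := by nlinarith
  have ht0 : 0 ≤ 2/π^2*x^2 := by positivity
  have htval : (2/π^2*x^2) * π^2 = 2*x^2 := by field_simp
  have h1u5 : x^2 ≤ 4.94*(1-u) := by
    nlinarith [mul_le_mul_of_nonneg_left hπ2.le ht0]
  have hu_lt1 : u < 1 := by nlinarith [sq_nonneg x]
  have hu0 : 0 < u := lt_of_lt_of_le hv0 hvu
  have hcq1 : cq ≤ 1 := by rw [hcq]; exact Real.cos_le_one _
  have hcqm1 : -1 ≤ cq := by rw [hcq]; exact Real.neg_one_le_cos _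
  have hdu : 0 < 1 + u * cq := by nlinarith [mul_le_mul_of_nonneg_left hcqm1 hu0.le]
  have hv1 : v < 1 := by nlinarith
  have hdv : 0 < 1 + v * cq := by nlinarith [mul_le_mul_of_nonneg_left hcqm1 hv0.le]
  have hnum : Real.sqrt (1 - u^2) ≤ Real.sqrt (1 - v^2) :=
    Real.sqrt_le_sqrt (by nlinarith)
  have hC1 : (1:ℝ) ≤ 62 * (ℓ:ℝ)^2 := by nlinarith
  have hkey : 1 + v * cq ≤ (62 * (ℓ:ℝ)^2) * (1 + u * cq) := by
    rcases le_or_gt 0 cq with hc | hc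
    · nlinarith [mul_le_mul_of_nonneg_right hvu hc,
        mul_le_mul_of_nonneg_right hC1 hdu.le]
    · have hxn : π/(2*(n:ℝ)) ≤ x := by
        by_contra hlt
        push_neg at hlt
        rw [lt_div_iff₀ (by positivity : (0:ℝ) < 2*(n:ℝ))] at hlt
        have hcq0 : 0 < cq := by
          rw [hcq]
          refine Real.cos_pos_of_mem_Ioo ⟨?_, ?_⟩
          · nlinarith [mul_nonneg (le_of_lt hnR) hx0.le]
          · nlinarith
        linarith
      have h4x : 2*π/n ≤ 4*x := by
        rw [div_le_iff₀ hnR]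
        rw [div_le_iff₀ (by positivity : (0:ℝ) < 2*(n:ℝ))] at hxn
        linarith
      have hb5 : b ≤ 5 * x := by rw [hbdef]; linarith
      have h1v : 1 - v ≤ ((ℓ:ℝ)*b)^2/2 := by
        rw [hvdef]
        linarith [Real.one_sub_sq_div_two_le_cos (x := (ℓ:ℝ)*b)]
      have hbx : (ℓ:ℝ)*b ≤ 5*((ℓ:ℝ)*x) := by
        have := mul_le_mul_of_nonneg_left hb5 (by positivity : (0:ℝ) ≤ (ℓ:ℝ))
        linarith
      have hsq : ((ℓ:ℝ)*b)^2 ≤ (5*((ℓ:ℝ)*x))^2 := pow_le_pow_left₀ hℓb0.le hbx 2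
      have hx2ℓ : (ℓ:ℝ)^2*x^2 ≤ (ℓ:ℝ)^2*(4.94*(1-u)) :=
        mul_le_mul_of_nonneg_left h1u5 (by positivity)
      have hsq' : (5*((ℓ:ℝ)*x))^2 = 25*((ℓ:ℝ)^2*x^2) := by ring
      have hℓu0 : 0 ≤ (ℓ:ℝ)^2*(1-u) := mul_nonneg (sq_nonneg _) (by linarith)
      have e2 : 1 - v ≤ 62 * (ℓ:ℝ)^2 * (1 - u) := by
        rw [hsq'] at hsq
        linarith [hsq, hx2ℓ, h1v, hℓu0]
      have hP1 : v*(1+cq) ≤ u*(1+cq) :=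
        mul_le_mul_of_nonneg_right hvu (by linarith : (0:ℝ) ≤ 1 + cq)
      have hP2 : 1*(u*(1+cq)) ≤ 62*(ℓ:ℝ)^2*(u*(1+cq)) :=
        mul_le_mul_of_nonneg_right hC1 (mul_nonneg hu0.le (by linarith : (0:ℝ) ≤ 1 + cq))
      linarith [hP1, hP2, e2]
  have hRHS : (62*(ℓ:ℝ)^2) * (Real.sqrt (1-v^2)/(1+v*cq))
      = (62*(ℓ:ℝ)^2 * Real.sqrt (1-v^2))/(1+v*cq) := by ring
  rw [hRHS, div_le_div_iff₀ hdu hdv]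
  refine le_trans (mul_le_mul hnum hkey hdv.le (Real.sqrt_nonneg _)) (le_of_eq (by ring))

lemma u_nonneg_lt_one {ℓ n : ℕ} (hℓ : 2 ≤ ℓ) {x : ℝ} (hx : 0 < x) (hx1 : (ℓ:ℝ) * x ≤ 1) :
    0 ≤ uFun ℓ x ∧ uFun ℓ x < 1 ∧ 0 < 1 + uFun ℓ x * Real.cos ((n:ℝ) * x) := by
  obtain ⟨hu1, hu2⟩ := u_bounds hℓ hx hx1
  have hℓ1 : (2:ℝ) ≤ (ℓ:ℝ) := by exact_mod_cast hℓ
  have hpi : (3:ℝ) < π := by have := Real.pi_gt_d6; linarith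
  have hx1' : x ≤ 1/2 := by nlinarith
  have hu0 : 0 ≤ uFun ℓ x := le_trans (Real.cos_nonneg_of_mem_Icc
    ⟨by nlinarith [mul_nonneg (by positivity : (0:ℝ) ≤ (ℓ:ℝ)) hx.le], by linarith⟩) hu1
  have hcosx : Real.cos x ≤ 1 - 2/π^2 * x^2 := Real.cos_le_one_sub_mul_cos_sq
    (by rw [abs_of_nonneg hx.le]; linarith)
  have hq : 0 < 2/π^2 * x^2 := by positivity
  have hu_lt1 : uFun ℓ x < 1 := by linarith
  refine ⟨hu0, hu_lt1, ?_⟩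
  nlinarith [Real.neg_one_le_cos ((n:ℝ)*x),
    mul_le_mul_of_nonneg_left (Real.neg_one_le_cos ((n:ℝ)*x)) hu0]

lemma f_nonneg {ℓ n : ℕ} (hℓ : 2 ≤ ℓ) {x : ℝ} (hx : 0 < x) (hx1 : (ℓ:ℝ) * x ≤ 1) :
    0 ≤ Real.sqrt (1 - uFun ℓ x ^ 2) / (1 + uFun ℓ x * Real.cos ((n:ℝ) * x)) :=
  div_nonneg (Real.sqrt_nonneg _) (u_nonneg_lt_one (n := n) hℓ hx hx1).2.2.le

lemma f_bound {ℓ n : ℕ} (hℓ : 2 ≤ ℓ) (hn : 1 ≤ n) {A x : ℝ} (hA1 : (ℓ:ℝ) * A ≤ 1)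
    (hx0 : 0 < x) (hxA : x ≤ A) :
    Real.sqrt (1 - uFun ℓ x ^ 2) / (1 + uFun ℓ x * Real.cos ((n:ℝ) * x)) ≤
      max 1 (1 - Real.cos (π/(2*(n:ℝ))))⁻¹ := by
  have hnR : (0:ℝ) < n := by exact_mod_cast hn
  have hℓ1 : (2:ℝ) ≤ (ℓ:ℝ) := by exact_mod_cast hℓ
  have hpi : (3:ℝ) < π := by have := Real.pi_gt_d6; linarith
  have hxℓ : (ℓ:ℝ) * x ≤ 1 := by nlinarith
  have hx1 : x ≤ 1/2 := by nlinarith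
  obtain ⟨hu0, hu1, hden⟩ := u_nonneg_lt_one (n := n) hℓ hx0 hxℓ
  have hn1 : (1:ℝ) ≤ (n:ℝ) := by exact_mod_cast hn
  have hnum : Real.sqrt (1 - uFun ℓ x ^ 2) ≤ 1 := by
    have h := Real.sqrt_le_sqrt (show 1 - uFun ℓ x ^ 2 ≤ 1 by nlinarith [sq_nonneg (uFun ℓ x)])
    simpa using h
  rcases le_or_gt x (π/(2*(n:ℝ))) with hc | hc
  · refine le_trans ?_ (le_max_left _ _)
    rw [div_le_one hden]
    have hcnn : 0 ≤ Real.cos ((n:ℝ)*x) := by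
      refine Real.cos_nonneg_of_mem_Icc ⟨by nlinarith [mul_nonneg hnR.le hx0.le], ?_⟩
      rw [le_div_iff₀ (by positivity : (0:ℝ) < 2*(n:ℝ))] at hc
      nlinarith
    nlinarith [mul_nonneg hu0 hcnn]
  · refine le_trans ?_ (le_max_right _ _)
    have hp2n : 0 < π/(2*(n:ℝ)) := by positivity
    have hccc : Real.cos x ≤ Real.cos (π/(2*(n:ℝ))) :=
      Real.cos_le_cos_of_nonneg_of_le_pi hp2n.le (by linarith) hc.le
    have hclt : Real.cos (π/(2*(n:ℝ))) < 1 := by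
      have := Real.cos_le_one_sub_mul_cos_sq (x := π/(2*(n:ℝ)))
        (by rw [abs_of_nonneg hp2n.le]; rw [div_le_iff₀ (by positivity : (0:ℝ) < 2*(n:ℝ))]; nlinarith)
      nlinarith [mul_pos (by positivity : (0:ℝ) < 2/π^2) (by positivity : (0:ℝ) < (π/(2*(n:ℝ)))^2)]
    have hd0 : 0 < 1 - Real.cos (π/(2*(n:ℝ))) := by linarith
    obtain ⟨-, hu2⟩ := u_bounds hℓ hx0 hxℓ
    have hden2 : 1 - Real.cos (π/(2*(n:ℝ))) ≤ 1 + uFun ℓ x * Real.cos ((n:ℝ)*x) := by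
      nlinarith [Real.neg_one_le_cos ((n:ℝ)*x),
        mul_le_mul_of_nonneg_left (Real.neg_one_le_cos ((n:ℝ)*x)) hu0]
    rw [← one_div]
    exact div_le_div₀ (by norm_num) hnum hd0 hden2

end IntegralNearZeroAux

open IntegralNearZeroAux MeasureTheory in
set_option maxHeartbeats 1000000 in
/-- For `ℓ ≥ 2` and `c ∈ (0, 1)`, there exist `M > 0` and `N` such that for all `n ≥ N`,
`∫₀^{n^{−c}} √(1 − u_ℓ(x)²)/(1 + u_ℓ(x) cos(nx)) dx ≤ M n^{−c}`. -/
theorem integral_near_zero_le (ℓ : ℕ) (hℓ : 2 ≤ ℓ) (c : ℝ) (hc : c ∈ Set.Ioo (0:ℝ) 1) :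
    ∃ M > 0, ∃ N : ℕ, ∀ n : ℕ, N ≤ n →
      (∫ x in (0:ℝ)..((n : ℝ) ^ (-c)),
          Real.sqrt (1 - uFun ℓ x ^ 2) / (1 + uFun ℓ x * Real.cos (n * x)))
        ≤ M * (n : ℝ) ^ (-c) := by
  obtain ⟨hc0, hc1⟩ := hc
  have hpi : (3:ℝ) < π := by have := Real.pi_gt_d6; linarith
  have hpi' : π < 3.1416 := by have := Real.pi_lt_d6; linarith
  have hℓ1 : (2:ℝ) ≤ (ℓ:ℝ) := by exact_mod_cast hℓ
  refine ⟨500 * (ℓ:ℝ)^2, by positivity, ?_⟩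
  have htend : Filter.Tendsto (fun n : ℕ => (n:ℝ)^(-c)) Filter.atTop (nhds 0) :=
    (tendsto_rpow_neg_atTop hc0).comp tendsto_natCast_atTop_atTop
  have hev : ∀ᶠ n : ℕ in Filter.atTop, (n:ℝ)^(-c) < ((1+2*π)*(ℓ:ℝ))⁻¹ :=
    htend.eventually_lt_const (by positivity)
  obtain ⟨N0, hN0⟩ := Filter.eventually_atTop.1 hev
  refine ⟨max N0 1, fun n hn => ?_⟩
  have hn1 : 1 ≤ n := le_trans (le_max_right _ _) hn
  have hnN0 : N0 ≤ n := le_trans (le_max_left _ _) hn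
  have hnR : (0:ℝ) < n := by exact_mod_cast hn1
  have hn1R : (1:ℝ) ≤ n := by exact_mod_cast hn1
  set T : ℝ := (n:ℝ)^(-c) with hT
  have hT0 : 0 < T := Real.rpow_pos_of_pos hnR _
  have hTs : T ≤ ((1+2*π)*(ℓ:ℝ))⁻¹ := (hN0 n hnN0).le
  have h1n : 1/(n:ℝ) ≤ T := by
    have h := Real.rpow_le_rpow_of_exponent_le hn1R (by linarith : -1 ≤ -c)
    rw [Real.rpow_neg_one] at h
    rw [one_div]
    exact h
  set K : ℕ := ⌈(n:ℝ)*T/(2*π)⌉₊ with hK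
  have hK1 : 1 ≤ K := by
    rw [hK]
    exact Nat.one_le_iff_ne_zero.2 (by positivity)
  have hKge : (n:ℝ)*T/(2*π) ≤ K := Nat.le_ceil _
  have hKlt : (K:ℝ) < (n:ℝ)*T/(2*π) + 1 := Nat.ceil_lt_add_one (by positivity)
  set A : ℝ := 2*π*K/n with hA
  have hTA : T ≤ A := by
    rw [hA, le_div_iff₀ hnR]
    rw [div_le_iff₀ (by positivity : (0:ℝ) < 2*π)] at hKge
    linarith
  have hAle : A ≤ T + 2*π/n := by
    rw [hA, div_le_iff₀ hnR]
    have h2 : 2*π*(K:ℝ) < (n:ℝ)*T + 2*π := by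
      have h3 := mul_lt_mul_of_pos_left hKlt (show (0:ℝ) < 2*π by positivity)
      have heq : 2*π*((n:ℝ)*T/(2*π) + 1) = (n:ℝ)*T + 2*π := by field_simp
      linarith [heq ▸ h3]
    have heq2 : (T + 2*π/(n:ℝ))*n = T*n + 2*π := by field_simp
    linarith
  have hA2 : A ≤ (1+2*π)*T := by
    have h6 : 2*π/(n:ℝ) ≤ 2*π*T := by
      have h7 := mul_le_mul_of_nonneg_left h1n (show (0:ℝ) ≤ 2*π by positivity)
      calc 2*π/(n:ℝ) = 2*π*(1/n) := by ring
        _ ≤ 2*π*T := h7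
    linarith
  have hA1 : (ℓ:ℝ)*A ≤ 1 := by
    have hfac : (0:ℝ) < (1+2*π)*(ℓ:ℝ) := by positivity
    have h4 := mul_le_mul_of_nonneg_left hTs hfac.le
    rw [mul_inv_cancel₀ hfac.ne'] at h4
    have h5 : (ℓ:ℝ)*A ≤ (ℓ:ℝ)*((1+2*π)*T) := mul_le_mul_of_nonneg_left hA2 (by positivity)
    nlinarith [h5, h4]
  have hA0 : 0 < A := lt_of_lt_of_le hT0 hTA
  set f : ℝ → ℝ := fun x => Real.sqrt (1 - uFun ℓ x ^ 2) / (1 + uFun ℓ x * Real.cos (n * x))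
    with hfdef
  have hum : Measurable (uFun ℓ) := by
    unfold uFun
    exact (Real.measurable_sin.comp (measurable_id.const_mul _)).div
      (Real.measurable_sin.const_mul _)
  have hfm : Measurable f := by
    rw [hfdef]
    exact ((Real.continuous_sqrt.measurable).comp (measurable_const.sub (hum.pow_const 2))).div
      (measurable_const.add (hum.mul (Real.measurable_cos.comp (measurable_id.const_mul _))))
  have hint : IntervalIntegrable f volume 0 A := by
    rw [intervalIntegrable_iff_integrableOn_Ioc_of_le hA0.le]
    refine ⟨hfm.aestronglyMeasurable, ?_⟩
    apply MeasureTheory.HasFiniteIntegral.restrict_of_bounded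
      (C := max 1 (1 - Real.cos (π/(2*(n:ℝ))))⁻¹) measure_Ioc_lt_top
    refine (MeasureTheory.ae_restrict_mem measurableSet_Ioc).mono fun x hx => ?_
    have hx0 : 0 < x := hx.1
    have hxA : x ≤ A := hx.2
    have hxℓ : (ℓ:ℝ)*x ≤ 1 :=
      le_trans (mul_le_mul_of_nonneg_left hxA (by positivity)) hA1
    rw [Real.norm_eq_abs, abs_of_nonneg (f_nonneg hℓ hx0 hxℓ)]
    exact f_bound hℓ hn1 hA1 hx0 hxA
  set ak : ℕ → ℝ := fun k => 2*π*k/n with hak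
  have hak0 : ak 0 = 0 := by simp [hak]
  have hakK : ak K = A := by rw [hak, hA]
  have hmono_ak : ∀ k : ℕ, ak k ≤ ak (k+1) := by
    intro k
    simp only [hak]
    rw [div_le_div_iff_of_pos_right hnR]
    push_cast
    nlinarith
  have haknn : ∀ k : ℕ, 0 ≤ ak k := fun k => by simp only [hak]; positivity
  have hbound_ak : ∀ k : ℕ, k ≤ K → ak k ≤ A := by
    intro k hk
    simp only [hak, hA]
    rw [div_le_div_iff_of_pos_right hnR]
    have : (k:ℝ) ≤ (K:ℝ) := by exact_mod_cast hk
    nlinarith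
  have hstep : ∀ k : ℕ, ak (k+1) = ak k + 2*π/n := by
    intro k
    simp only [hak]
    push_cast
    field_simp
  have hintsub : ∀ p q : ℝ, 0 ≤ p → p ≤ q → q ≤ A → IntervalIntegrable f volume p q := by
    intro p q hp hpq hqA
    refine hint.mono_set ?_
    rw [Set.uIcc_of_le hpq, Set.uIcc_of_le hA0.le]
    exact Set.Icc_subset_Icc hp hqA
  have hadj : ∀ k, k < K → IntervalIntegrable f volume (ak k) (ak (k+1)) := fun k hk =>
    hintsub _ _ (haknn k) (hmono_ak k) (hbound_ak (k+1) hk)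
  have hsplit := intervalIntegral.sum_integral_adjacent_intervals hadj
  rw [hak0, hakK] at hsplit
  have hadd := intervalIntegral.integral_add_adjacent_intervals
      (hintsub 0 T le_rfl hT0.le hTA) (hintsub T A hT0.le hTA le_rfl)
  have hTApos : 0 ≤ ∫ x in T..A, f x := by
    apply intervalIntegral.integral_nonneg hTA
    intro x hx
    exact f_nonneg hℓ (lt_of_lt_of_le hT0 hx.1)
      (le_trans (mul_le_mul_of_nonneg_left hx.2 (by positivity)) hA1)
  have h0ae : ∀ᵐ x : ℝ ∂volume, x ≠ 0 := by
    rw [MeasureTheory.ae_iff]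
    simp only [ne_eq, not_not, Set.setOf_eq_eq_singleton]
    exact Real.volume_singleton
  have hper : ∀ k, k < K →
      (∫ x in ak k..ak (k+1), f x) ≤ 62*(ℓ:ℝ)^2 * (2*π/n) := by
    intro k hk
    have hbk : ak k + 2*π/n ≤ A := by rw [← hstep k]; exact hbound_ak (k+1) hk
    have hbl : (ℓ:ℝ)*(ak k + 2*π/n) ≤ 1 :=
      le_trans (mul_le_mul_of_nonneg_left hbk (by positivity)) hA1
    have h2pin : 0 < 2*π/(n:ℝ) := by positivity
    have hbk0 : 0 < ak k + 2*π/n := by linarith [haknn k]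
    have hℓbk : 0 < (ℓ:ℝ)*(ak k + 2*π/n) := mul_pos (by linarith) hbk0
    set v : ℝ := Real.cos ((ℓ:ℝ)*(ak k + 2*π/n)) with hv
    have hv0 : 0 ≤ v := by
      rw [hv]
      exact Real.cos_nonneg_of_mem_Icc ⟨by linarith, by linarith⟩
    have hv1 : v < 1 := by
      have habs : |(ℓ:ℝ)*(ak k + 2*π/n)| ≤ π := by
        rw [abs_of_nonneg hℓbk.le]; linarith
      have hcc := Real.cos_le_one_sub_mul_cos_sq habs
      have hq : 0 < 2/π^2*((ℓ:ℝ)*(ak k + 2*π/n))^2 := by positivity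
      rw [hv]; linarith
    have hgc : Continuous fun x : ℝ =>
        62*(ℓ:ℝ)^2 * (Real.sqrt (1 - v^2) / (1 + v*Real.cos ((n:ℝ)*x))) := by
      apply continuous_const.mul
      refine Continuous.div continuous_const
        (continuous_const.add (continuous_const.mul
          (Real.continuous_cos.comp (continuous_const.mul continuous_id)))) ?_
      intro x
      nlinarith [Real.neg_one_le_cos ((n:ℝ)*x), Real.cos_le_one ((n:ℝ)*x)]
    have hmae : f ≤ᵐ[MeasureTheory.volume.restrict (Set.Icc (ak k) (ak (k+1)))]
        fun x => 62*(ℓ:ℝ)^2 * (Real.sqrt (1 - v^2) / (1 + v*Real.cos ((n:ℝ)*x))) := by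
      refine ((MeasureTheory.ae_restrict_mem measurableSet_Icc).and
        (MeasureTheory.ae_restrict_of_ae h0ae)).mono ?_
      rintro x ⟨hmem, hx0⟩
      have hx0' : 0 < x := lt_of_le_of_ne (le_trans (haknn k) hmem.1) (Ne.symm hx0)
      have hxb : x ≤ ak k + 2*π/n := by rw [← hstep k]; exact hmem.2
      have hpb := pointwise_bound hℓ hn1 (haknn k) hbl hx0' hmem.1 hxb
      rw [← hv] at hpb
      exact hpb
    have hmon := intervalIntegral.integral_mono_ae_restrict (hmono_ak k) (hadj k hk)
      (hgc.intervalIntegrable _ _) hmae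
    have heval : (∫ x in ak k..ak (k+1),
        62*(ℓ:ℝ)^2 * (Real.sqrt (1 - v^2) / (1 + v*Real.cos ((n:ℝ)*x))))
        = 62*(ℓ:ℝ)^2*(2*π/n) := by
      rw [intervalIntegral.integral_const_mul, hstep k,
        integral_period hv0 hv1 hn1 (ak k)]
    rw [heval] at hmon
    exact hmon
  calc (∫ x in (0:ℝ)..T, f x) ≤ ∫ x in (0:ℝ)..A, f x := by linarith [hadd, hTApos]
    _ = ∑ k ∈ Finset.range K, ∫ x in ak k..ak (k+1), f x := hsplit.symm
    _ ≤ ∑ k ∈ Finset.range K, 62*(ℓ:ℝ)^2*(2*π/n) :=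
        Finset.sum_le_sum fun k hk => hper k (Finset.mem_range.1 hk)
    _ = K*(62*(ℓ:ℝ)^2*(2*π/n)) := by
        rw [Finset.sum_const, Finset.card_range, nsmul_eq_mul]
    _ = 62*(ℓ:ℝ)^2*A := by rw [hA]; field_simp
    _ ≤ 500*(ℓ:ℝ)^2*T := by
        nlinarith [mul_le_mul_of_nonneg_left hA2 (by positivity : (0:ℝ) ≤ 62*(ℓ:ℝ)^2),
          mul_le_mul_of_nonneg_right hpi'.le (mul_nonneg (sq_nonneg (ℓ:ℝ)) hT0.le)]
end
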